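/- arXiv:1311.3606 — 6 statements merged into one kernel-verified Lean document; each statement's English description precedes it below -/
import Mathlib

section
/- For M>1 define g_M(u)=max(1/M, 1-Mu) for u≥0. Suppose μ: ℝ^d → ℝ^d and x,v ∈ ℝ^d satisfy ‖μ - x‖ ≤ M(t-s)‖x‖ and ‖μ‖² ≥ g_M(t-s)‖x‖². Then ‖v-μ‖² ≥ M^{-1}‖v-x‖² + (1-g_M(t-s))‖v‖² - 2⟨v, μ - g_M(t-s)x⟩, and moreover |⟨v, μ - g_M(t-s)x⟩| ≤ ‖v‖‖x‖(M(t-s) + 1 - g_M(t-s)). -/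
open Real

section InnerProductSpace

variable {E : Type*} [NormedAddCommGroup E] [InnerProductSpace ℝ E]

theorem norm_sub_sq_eq_smul_cross_term (v μ x : E) (g : ℝ) :
    ‖v - μ‖ ^ 2 = g * ‖v - x‖ ^ 2 + (‖μ‖ ^ 2 - g * ‖x‖ ^ 2) + (1 - g) * ‖v‖ ^ 2
      - 2 * inner ℝ v (μ - g • x) := by
  rw [norm_sub_sq_real v μ, norm_sub_sq_real v x, inner_sub_right, real_inner_smul_right]
  ring

theorem le_norm_sub_sq_of_le_of_mul_norm_sq_le {v μ x : E} {c g : ℝ}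
    (hcg : c ≤ g) (hμ : g * ‖x‖ ^ 2 ≤ ‖μ‖ ^ 2) :
    c * ‖v - x‖ ^ 2 + (1 - g) * ‖v‖ ^ 2 - 2 * inner ℝ v (μ - g • x) ≤ ‖v - μ‖ ^ 2 := by
  rw [norm_sub_sq_eq_smul_cross_term v μ x g]
  nlinarith [sq_nonneg ‖v - x‖]

theorem abs_inner_sub_smul_le {v μ x : E} {a g : ℝ} (hg : g ≤ 1)
    (hμ : ‖μ - x‖ ≤ a * ‖x‖) :
    |inner ℝ v (μ - g • x)| ≤ ‖v‖ * ‖x‖ * (a + 1 - g) := by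
  have hsplit : μ - g • x = (μ - x) + (1 - g) • x := by
    rw [sub_smul, one_smul]; abel
  have hnorm : ‖μ - g • x‖ ≤ ‖x‖ * (a + 1 - g) := calc
    ‖μ - g • x‖ ≤ ‖μ - x‖ + ‖(1 - g) • x‖ := hsplit ▸ norm_add_le _ _
    _ = ‖μ - x‖ + (1 - g) * ‖x‖ := by
      rw [norm_smul, Real.norm_of_nonneg (sub_nonneg.2 hg)]
    _ ≤ ‖x‖ * (a + 1 - g) := by linarith
  calc |inner ℝ v (μ - g • x)| ≤ ‖v‖ * ‖μ - g • x‖ := abs_real_inner_le_norm _ _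
    _ ≤ ‖v‖ * (‖x‖ * (a + 1 - g)) := by gcongr
    _ = ‖v‖ * ‖x‖ * (a + 1 - g) := by ring

end InnerProductSpace

theorem max_one_div_one_sub_mul_le_one {M u : ℝ} (hM : 1 ≤ M) (hu : 0 ≤ u) :
    max (1 / M) (1 - M * u) ≤ 1 :=
  max_le (div_le_one_of_le₀ hM (by linarith)) (by nlinarith)

theorem stmt_0_general {d : ℕ} (M s t : ℝ) (hM : 1 < M) (hst : s ≤ t)
    (μ x v : EuclideanSpace ℝ (Fin d))
    (gM : ℝ → ℝ) (hgM : ∀ u : ℝ, 0 ≤ u → gM u = max (1 / M) (1 - M * u))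
    (h1 : ‖μ - x‖ ≤ M * (t - s) * ‖x‖)
    (h2 : gM (t - s) * ‖x‖ ^ 2 ≤ ‖μ‖ ^ 2) :
    (M⁻¹ * ‖v - x‖ ^ 2 + (1 - gM (t - s)) * ‖v‖ ^ 2
        - 2 * inner ℝ v (μ - gM (t - s) • x) ≤ ‖v - μ‖ ^ 2) ∧
    |(inner ℝ v (μ - gM (t - s) • x) : ℝ)|
        ≤ ‖v‖ * ‖x‖ * (M * (t - s) + 1 - gM (t - s)) := by
  have hg : gM (t - s) = max (1 / M) (1 - M * (t - s)) := hgM _ (sub_nonneg.2 hst)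
  have hg_ge : M⁻¹ ≤ gM (t - s) := hg ▸ one_div M ▸ le_max_left _ _
  have hg_le : gM (t - s) ≤ 1 := hg ▸ max_one_div_one_sub_mul_le_one hM.le (sub_nonneg.2 hst)
  exact ⟨le_norm_sub_sq_of_le_of_mul_norm_sq_le hg_ge h2, abs_inner_sub_smul_le hg_le h1⟩

/-- Key estimate in the proof of Lemma 4.5: lower bound on `‖v - μ‖²` and
bound on the cross term, given the assumptions on `μ`. -/
theorem stmt_0 {d : ℕ} (M s t : ℝ) (hM : 1 < M) (hs : 0 ≤ s) (hst : s ≤ t)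
    (μ x v : EuclideanSpace ℝ (Fin d))
    (gM : ℝ → ℝ) (hgM : ∀ u : ℝ, 0 ≤ u → gM u = max (1 / M) (1 - M * u))
    (h1 : ‖μ - x‖ ≤ M * (t - s) * ‖x‖)
    (h2 : gM (t - s) * ‖x‖ ^ 2 ≤ ‖μ‖ ^ 2) :
    (M⁻¹ * ‖v - x‖ ^ 2 + (1 - gM (t - s)) * ‖v‖ ^ 2
        - 2 * inner ℝ v (μ - gM (t - s) • x) ≤ ‖v - μ‖ ^ 2) ∧
    |(inner ℝ v (μ - gM (t - s) • x) : ℝ)|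
        ≤ ‖v‖ * ‖x‖ * (M * (t - s) + 1 - gM (t - s)) :=
  stmt_0_general M s t hM hst μ x v gM hgM h1 h2
end

section
/- Let ã: [0,T] → ℝ^{d×d} be continuous with y'ã(τ)y ≥ η‖y‖² for all y and some η > 0, and let Φ(s,τ) be a continuous family of invertible matrices with ‖Φ(s,τ)‖ ≤ C uniformly. Define H̃(s)⁻¹ = ∫_s^T Φ(s,τ) ã(τ) Φ(s,τ)' dτ. Then there exist constants 0 < c ≤ c̃ such that c(T-s)‖y‖² ≤ y'H̃(s)⁻¹y ≤ c̃(T-s)‖y‖² for all s ∈ [0,T) and y ∈ ℝ^d. -/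
/-!
With `x = Φ(s,τ)ᵀ y` the integrand's quadratic form is `xᵀ ã(τ) x`, which is positive for
`y ≠ 0` since `Φ(s,τ)` is invertible and `ã(τ)` elliptic. The integrand is continuous on the
compact square `[0,T]²`, so its quadratic form attains a positive minimum `c` and a finite
maximum `C` on the square times the unit sphere; by homogeneity
`c ‖y‖² ≤ yᵀ Φ ã Φᵀ y ≤ C ‖y‖²` for all `y`, and integrating over `[s,T]` gives the factor `T - s`.
-/

open Matrix intervalIntegral

attribute [local instance] Matrix.normedAddCommGroup Matrix.normedSpace

namespace Matrix

variable {n : Type*} [Fintype n]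

lemma dotProduct_self_pos_iff {y : n → ℝ} : 0 < y ⬝ᵥ y ↔ y ≠ 0 := by
  simpa using dotProduct_self_star_pos_iff (v := y)

lemma dotProduct_mul_mul_transpose_mulVec (P A : Matrix n n ℝ) (y : n → ℝ) :
    y ⬝ᵥ ((P * A * Pᵀ) *ᵥ y) = (Pᵀ *ᵥ y) ⬝ᵥ (A *ᵥ (Pᵀ *ᵥ y)) := by
  rw [← mulVec_mulVec, ← mulVec_mulVec, dotProduct_mulVec, ← mulVec_transpose]

lemma dotProduct_mul_mul_transpose_mulVec_pos [DecidableEq n] {P A : Matrix n n ℝ} (hP : IsUnit P)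
    (hA : ∀ x ≠ 0, 0 < x ⬝ᵥ (A *ᵥ x)) {y : n → ℝ} (hy : y ≠ 0) :
    0 < y ⬝ᵥ ((P * A * Pᵀ) *ᵥ y) := by
  have hx : Pᵀ *ᵥ y ≠ 0 := fun h0 => hy <|
    mulVec_injective_iff_isUnit.mpr ((isUnit_transpose P).mpr hP) (h0.trans (mulVec_zero _).symm)
  rw [dotProduct_mul_mul_transpose_mulVec]
  exact hA _ hx

lemma isCompact_setOf_dotProduct_self_eq_one : IsCompact {u : n → ℝ | u ⬝ᵥ u = 1} := by
  refine (isCompact_univ_pi fun _ => isCompact_Icc (a := (-1 : ℝ)) (b := 1)).of_isClosed_subset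
    (isClosed_eq (by fun_prop) continuous_const) fun u hu i _ => ?_
  have : u i * u i ≤ 1 := hu ▸
    Finset.single_le_sum (f := fun j => u j * u j) (fun j _ => mul_self_nonneg _)
      (Finset.mem_univ i)
  exact abs_le.mp (abs_le_one_iff_mul_self_le_one.mpr this)

lemma dotProduct_mulVec_nonneg_of_unit_sphere {B : Matrix n n ℝ}
    (hB : ∀ u : n → ℝ, u ⬝ᵥ u = 1 → 0 ≤ u ⬝ᵥ (B *ᵥ u)) (y : n → ℝ) :
    0 ≤ y ⬝ᵥ (B *ᵥ y) := by
  rcases eq_or_ne y 0 with rfl | hy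
  · simp
  have hyy : 0 < y ⬝ᵥ y := dotProduct_self_pos_iff.mpr hy
  set r := √(y ⬝ᵥ y)
  have hr : r ^ 2 = y ⬝ᵥ y := Real.sq_sqrt hyy.le
  have hr0 : r ≠ 0 := (Real.sqrt_pos.mpr hyy).ne'
  have hu := hB (r⁻¹ • y) (by
    simp only [smul_dotProduct, dotProduct_smul, smul_eq_mul, ← hr]; field_simp)
  simp only [mulVec_smul, smul_dotProduct, dotProduct_smul, smul_eq_mul] at hu
  rw [← mul_assoc] at hu
  exact nonneg_of_mul_nonneg_right hu (by positivity)

lemma dotProduct_sub_smul_one_mulVec [DecidableEq n] (A : Matrix n n ℝ) (c : ℝ) (y : n → ℝ) :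
    y ⬝ᵥ ((A - c • 1) *ᵥ y) = y ⬝ᵥ (A *ᵥ y) - c * (y ⬝ᵥ y) := by
  simp [sub_mulVec, dotProduct_sub, smul_mulVec]

lemma dotProduct_smul_one_sub_mulVec [DecidableEq n] (A : Matrix n n ℝ) (c : ℝ) (y : n → ℝ) :
    y ⬝ᵥ ((c • 1 - A) *ᵥ y) = c * (y ⬝ᵥ y) - y ⬝ᵥ (A *ᵥ y) := by
  simp [sub_mulVec, dotProduct_sub, smul_mulVec]

lemma _root_.ContinuousOn.dotProduct_mulVec_prod {X : Type*} [TopologicalSpace X] {S : Set X}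
    {A : X → Matrix n n ℝ} (hA : ContinuousOn A S) (U : Set (n → ℝ)) :
    ContinuousOn (fun z : X × (n → ℝ) => z.2 ⬝ᵥ (A z.1 *ᵥ z.2)) (S ×ˢ U) := by
  have hq : Continuous fun q : Matrix n n ℝ × (n → ℝ) => q.2 ⬝ᵥ (q.1 *ᵥ q.2) :=
    continuous_snd.dotProduct (continuous_fst.matrix_mulVec continuous_snd)
  exact hq.comp_continuousOn
    ((hA.comp continuousOn_fst fun _ hz => hz.1).prodMk continuousOn_snd)

variable (n) in
noncomputable def quadFormCLM (y : n → ℝ) : Matrix n n ℝ →L[ℝ] ℝ :=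
  LinearMap.toContinuousLinearMap
    { toFun := fun A => y ⬝ᵥ (A *ᵥ y)
      map_add' := fun A B => by simp [add_mulVec, dotProduct_add]
      map_smul' := fun r A => by simp [smul_mulVec, dotProduct_smul] }

lemma dotProduct_intervalIntegral_mulVec {f : ℝ → Matrix n n ℝ} {a b : ℝ}
    (hf : ContinuousOn f (Set.uIcc a b)) (y : n → ℝ) :
    y ⬝ᵥ ((∫ τ in a..b, f τ) *ᵥ y) = ∫ τ in a..b, y ⬝ᵥ (f τ *ᵥ y) := by
  -- instance search does not see through `Matrix.normedAddCommGroup` to the product topology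
  let : ENormedAddMonoid (Matrix n n ℝ) := NormedAddGroup.toENormedAddMonoid
  exact ((quadFormCLM n y).intervalIntegral_comp_comm hf.intervalIntegrable).symm

variable {f : ℝ → Matrix n n ℝ} {a b c : ℝ} {y : n → ℝ}

lemma le_dotProduct_intervalIntegral_mulVec (hab : a ≤ b)
    (hf : ContinuousOn f (Set.Icc a b)) (h : ∀ τ ∈ Set.Icc a b, c * (y ⬝ᵥ y) ≤ y ⬝ᵥ (f τ *ᵥ y)) :
    c * (b - a) * (y ⬝ᵥ y) ≤ y ⬝ᵥ ((∫ τ in a..b, f τ) *ᵥ y) := by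
  rw [← Set.uIcc_of_le hab] at hf
  rw [dotProduct_intervalIntegral_mulVec hf, mul_right_comm, mul_comm, ← smul_eq_mul,
    ← integral_const]
  exact integral_mono_on hab intervalIntegrable_const
    ((quadFormCLM n y).continuous.comp_continuousOn hf).intervalIntegrable h

lemma dotProduct_intervalIntegral_mulVec_le (hab : a ≤ b)
    (hf : ContinuousOn f (Set.Icc a b)) (h : ∀ τ ∈ Set.Icc a b, y ⬝ᵥ (f τ *ᵥ y) ≤ c * (y ⬝ᵥ y)) :
    y ⬝ᵥ ((∫ τ in a..b, f τ) *ᵥ y) ≤ c * (b - a) * (y ⬝ᵥ y) := by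
  rw [← Set.uIcc_of_le hab] at hf
  rw [dotProduct_intervalIntegral_mulVec hf, mul_right_comm, mul_comm, ← smul_eq_mul,
    ← integral_const]
  exact integral_mono_on hab ((quadFormCLM n y).continuous.comp_continuousOn hf).intervalIntegrable
    intervalIntegrable_const h

section Compact

variable [DecidableEq n] {X : Type*} [TopologicalSpace X] {S : Set X} {A : X → Matrix n n ℝ}

lemma _root_.IsCompact.exists_pos_mul_dotProduct_le (hS : IsCompact S) (hA : ContinuousOn A S)
    (hpos : ∀ p ∈ S, ∀ y ≠ 0, 0 < y ⬝ᵥ (A p *ᵥ y)) :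
    ∃ c > 0, ∀ p ∈ S, ∀ y, c * (y ⬝ᵥ y) ≤ y ⬝ᵥ (A p *ᵥ y) := by
  obtain ⟨c, hc, hcF⟩ := (hS.prod isCompact_setOf_dotProduct_self_eq_one).exists_forall_le'
    (hA.dotProduct_mulVec_prod _)
    fun z hz => hpos z.1 hz.1 z.2 (dotProduct_self_pos_iff.mp (hz.2.symm ▸ one_pos))
  refine ⟨c, hc, fun p hp y => sub_nonneg.mp ?_⟩
  rw [← dotProduct_sub_smul_one_mulVec]
  refine dotProduct_mulVec_nonneg_of_unit_sphere (fun u hu => ?_) y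
  rw [dotProduct_sub_smul_one_mulVec, hu, mul_one, sub_nonneg]
  exact hcF (p, u) ⟨hp, hu⟩

lemma _root_.IsCompact.exists_dotProduct_le_mul (hS : IsCompact S) (hA : ContinuousOn A S) :
    ∃ C, ∀ p ∈ S, ∀ y, y ⬝ᵥ (A p *ᵥ y) ≤ C * (y ⬝ᵥ y) := by
  obtain ⟨C, hC⟩ := (hS.prod isCompact_setOf_dotProduct_self_eq_one).bddAbove_image
    (hA.dotProduct_mulVec_prod _)
  refine ⟨C, fun p hp y => sub_nonneg.mp ?_⟩
  rw [← dotProduct_smul_one_sub_mulVec]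
  refine dotProduct_mulVec_nonneg_of_unit_sphere (fun u hu => ?_) y
  rw [dotProduct_smul_one_sub_mulVec, hu, mul_one, sub_nonneg]
  exact hC ⟨(p, u), ⟨hp, hu⟩, rfl⟩

end Compact

end Matrix

theorem stmt_6_general {d : ℕ} (T : ℝ)
    (atil : ℝ → Matrix (Fin d) (Fin d) ℝ)
    (ha_cont : ContinuousOn atil (Set.Icc 0 T))
    (η : ℝ) (hη : 0 < η)
    (ha_ell : ∀ τ ∈ Set.Icc (0 : ℝ) T, ∀ y : Fin d → ℝ,
      η * (y ⬝ᵥ y) ≤ y ⬝ᵥ (atil τ *ᵥ y))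
    (Φ : ℝ → ℝ → Matrix (Fin d) (Fin d) ℝ)
    (hΦcont : ContinuousOn (fun p : ℝ × ℝ => Φ p.1 p.2)
      (Set.Icc 0 T ×ˢ Set.Icc 0 T))
    (hΦinv : ∀ s ∈ Set.Icc (0 : ℝ) T, ∀ τ ∈ Set.Icc (0 : ℝ) T, IsUnit (Φ s τ))
    (Hinv : ℝ → Matrix (Fin d) (Fin d) ℝ)
    (hHinv : ∀ s ∈ Set.Ico (0 : ℝ) T,
      Hinv s = ∫ τ in s..T, Φ s τ * atil τ * (Φ s τ)ᵀ) :
    ∃ c ctil : ℝ, 0 < c ∧ c ≤ ctil ∧ ∀ s ∈ Set.Ico (0 : ℝ) T, ∀ y : Fin d → ℝ,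
      c * (T - s) * (y ⬝ᵥ y) ≤ y ⬝ᵥ (Hinv s *ᵥ y) ∧
      y ⬝ᵥ (Hinv s *ᵥ y) ≤ ctil * (T - s) * (y ⬝ᵥ y) := by
  set K := Set.Icc 0 T ×ˢ Set.Icc 0 T
  set G : ℝ × ℝ → Matrix (Fin d) (Fin d) ℝ := fun p => Φ p.1 p.2 * atil p.2 * (Φ p.1 p.2)ᵀ
  have hG : ContinuousOn G K :=
    (hΦcont.mul (ha_cont.comp continuousOn_snd fun _ hp => hp.2)).mul
      (continuous_id.matrix_transpose.comp_continuousOn hΦcont)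
  have hGpos : ∀ p ∈ K, ∀ y ≠ 0, 0 < y ⬝ᵥ (G p *ᵥ y) := fun p hp _ =>
    dotProduct_mul_mul_transpose_mulVec_pos (hΦinv _ hp.1 _ hp.2) fun x hx =>
      (mul_pos hη (dotProduct_self_pos_iff.mpr hx)).trans_le (ha_ell _ hp.2 x)
  have hK : IsCompact K := isCompact_Icc.prod isCompact_Icc
  obtain ⟨c, hc, hcG⟩ := hK.exists_pos_mul_dotProduct_le hG hGpos
  obtain ⟨C, hCG⟩ := hK.exists_dotProduct_le_mul hG
  refine ⟨c, max c C, hc, le_max_left c C, fun s hs y => ?_⟩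
  have hmem : ∀ τ ∈ Set.Icc s T, (s, τ) ∈ K :=
    fun τ hτ => ⟨Set.Ico_subset_Icc_self hs, Set.Icc_subset_Icc_left hs.1 hτ⟩
  have hGs : ContinuousOn (fun τ => G (s, τ)) (Set.Icc s T) :=
    hG.comp (Continuous.prodMk_right s).continuousOn hmem
  rw [hHinv s hs]
  refine ⟨le_dotProduct_intervalIntegral_mulVec hs.2.le hGs fun τ hτ => hcG _ (hmem τ hτ) y,
    dotProduct_intervalIntegral_mulVec_le hs.2.le hGs fun τ hτ => ?_⟩
  exact (hCG _ (hmem τ hτ) y).trans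
    (mul_le_mul_of_nonneg_right (le_max_right c C) (dotProduct_self_star_nonneg y))

/-- Two-sided bound of Lemma 5.3 on
`H̃(s)⁻¹ = ∫_s^T Φ(s,τ) ã(τ) Φ(s,τ)' dτ`:
`c (T-s) ‖y‖² ≤ y' H̃(s)⁻¹ y ≤ c̃ (T-s) ‖y‖²`. -/
theorem stmt_6 {d : ℕ} (T : ℝ) (hT : 0 < T)
    (atil : ℝ → Matrix (Fin d) (Fin d) ℝ)
    (ha_cont : ContinuousOn atil (Set.Icc 0 T))
    (η : ℝ) (hη : 0 < η)
    (ha_ell : ∀ τ ∈ Set.Icc (0 : ℝ) T, ∀ y : Fin d → ℝ,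
      η * (y ⬝ᵥ y) ≤ y ⬝ᵥ (atil τ *ᵥ y))
    (Φ : ℝ → ℝ → Matrix (Fin d) (Fin d) ℝ)
    (hΦcont : ContinuousOn (fun p : ℝ × ℝ => Φ p.1 p.2)
      (Set.Icc 0 T ×ˢ Set.Icc 0 T))
    (hΦinv : ∀ s ∈ Set.Icc (0 : ℝ) T, ∀ τ ∈ Set.Icc (0 : ℝ) T, IsUnit (Φ s τ))
    (C : ℝ) (hΦC : ∀ s ∈ Set.Icc (0 : ℝ) T, ∀ τ ∈ Set.Icc (0 : ℝ) T, ‖Φ s τ‖ ≤ C)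
    (Hinv : ℝ → Matrix (Fin d) (Fin d) ℝ)
    (hHinv : ∀ s ∈ Set.Ico (0 : ℝ) T,
      Hinv s = ∫ τ in s..T, Φ s τ * atil τ * (Φ s τ)ᵀ) :
    ∃ c ctil : ℝ, 0 < c ∧ c ≤ ctil ∧ ∀ s ∈ Set.Ico (0 : ℝ) T, ∀ y : Fin d → ℝ,
      c * (T - s) * (y ⬝ᵥ y) ≤ y ⬝ᵥ (Hinv s *ᵥ y) ∧
      y ⬝ᵥ (Hinv s *ᵥ y) ≤ ctil * (T - s) * (y ⬝ᵥ y) :=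
  stmt_6_general T atil ha_cont η hη ha_ell Φ hΦcont hΦinv Hinv hHinv
end

section
/- Under the setting of Lemma 5.1 (linear process with smooth coefficients and uniformly elliptic ã), there exists C > 0 such that for all s ∈ [0,T) and x, y ∈ ℝ^d: (a) (T-s)‖H̃(s)‖ ≤ C; (b) ‖r̃(s,x)‖ ≤ C(1 + ‖v-x‖/(T-s)); (c) ‖r̃(s,y) - r̃(s,x)‖ ≤ C‖y-x‖/(T-s); and (d) ‖v-x‖/(T-s) ≤ C(1 + ‖r̃(s,x)‖). -/
open Matrix Real intervalIntegral

attribute [local instance] Matrix.normedAddCommGroup Matrix.normedSpace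

/-- Euclidean norm of a vector in `ℝ^d`. -/
noncomputable def enorm9 {d : ℕ} (y : Fin d → ℝ) : ℝ := Real.sqrt (y ⬝ᵥ y)

/-!
Let `M(s) = gramian Φ ã T s = ∫_s^T Φ(s,τ) ã(τ) Φ(s,τ)ᵀ dτ`, so that `H̃(s) = M(s)⁻¹`.
Uniqueness for linear ODEs gives `Φ(r,s) Φ(s,τ) = Φ(r,τ)` on `[0,T]`, so `Φ` is jointly
continuous there with inverse `Φ(τ,s)`, and compactness bounds all the coefficients.
Ellipticity of `ã` and the bound on `Φ(τ,s)` give `z ⬝ M(s) z ≥ c (T-s) |z|²`, whence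
`(T-s) |H̃(s) y| ≤ c⁻¹ |y|`: this is (a) and (c). Bounded integrands give `‖M(s)‖ ≤ C (T-s)` and
`|v(s) - v| ≤ C (T-s)`; combined with `v(s) - x = M(s) r̃(s,x)` these yield (b) and (d).
-/

open Set Function

section EntrywiseNorm

variable {l m n : Type*} [Fintype l] [Fintype m] [Fintype n]

lemma norm_mul_le_card_mul (A : Matrix l m ℝ) (B : Matrix m n ℝ) :
    ‖A * B‖ ≤ Fintype.card m * ‖A‖ * ‖B‖ := by
  rw [Matrix.norm_le_iff (by positivity)]
  intro i j
  calc ‖(A * B) i j‖ ≤ ∑ k, ‖A i k‖ * ‖B k j‖ := by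
        simpa only [mul_apply, norm_mul] using norm_sum_le Finset.univ fun k => A i k * B k j
    _ ≤ ∑ _k : m, ‖A‖ * ‖B‖ := by
        gcongr
        exacts [A.norm_entry_le_entrywise_sup_norm, B.norm_entry_le_entrywise_sup_norm]
    _ = Fintype.card m * ‖A‖ * ‖B‖ := by simp [mul_assoc]

lemma norm_mulVec_le_card_mul (A : Matrix l m ℝ) (y : m → ℝ) :
    ‖A *ᵥ y‖ ≤ Fintype.card m * ‖A‖ * ‖y‖ := by
  refine (pi_norm_le_iff_of_nonneg (by positivity)).2 fun i => ?_
  calc ‖(A *ᵥ y) i‖ ≤ ∑ k, ‖A i k‖ * ‖y k‖ := by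
        simpa only [mulVec, dotProduct, norm_mul] using norm_sum_le Finset.univ fun k => A i k * y k
    _ ≤ ∑ _k : m, ‖A‖ * ‖y‖ := by
        gcongr
        exacts [A.norm_entry_le_entrywise_sup_norm, norm_le_pi_norm y _]
    _ = Fintype.card m * ‖A‖ * ‖y‖ := by simp [mul_assoc]

end EntrywiseNorm

section EuclideanNorm

variable {d : ℕ}

lemma enorm9_eq_norm_toLp (y : Fin d → ℝ) : enorm9 y = ‖WithLp.toLp 2 y‖ := by
  rw [EuclideanSpace.norm_eq, enorm9, dotProduct]
  simp [sq]

lemma enorm9_nonneg (y : Fin d → ℝ) : 0 ≤ enorm9 y := Real.sqrt_nonneg _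

lemma dotProduct_self_eq_enorm9_sq (y : Fin d → ℝ) : y ⬝ᵥ y = enorm9 y ^ 2 :=
  (Real.sq_sqrt (Finset.sum_nonneg fun i _ => mul_self_nonneg (y i))).symm

lemma dotProduct_le_enorm9_mul (x y : Fin d → ℝ) : x ⬝ᵥ y ≤ enorm9 x * enorm9 y := by
  rw [enorm9_eq_norm_toLp, enorm9_eq_norm_toLp]
  refine le_of_eq_of_le ?_ (real_inner_le_norm _ _)
  simp [EuclideanSpace.inner_eq_star_dotProduct, dotProduct_comm]

lemma enorm9_add_le (x y : Fin d → ℝ) : enorm9 (x + y) ≤ enorm9 x + enorm9 y := by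
  simpa only [enorm9_eq_norm_toLp, WithLp.toLp_add] using norm_add_le _ _

lemma enorm9_sub_le (x y : Fin d → ℝ) : enorm9 (x - y) ≤ enorm9 x + enorm9 y := by
  simpa only [enorm9_eq_norm_toLp, WithLp.toLp_sub] using norm_sub_le _ _

lemma enorm9_sub_comm (x y : Fin d → ℝ) : enorm9 (x - y) = enorm9 (y - x) := by
  simpa only [enorm9_eq_norm_toLp, WithLp.toLp_sub] using norm_sub_rev _ _

lemma norm_le_enorm9 (y : Fin d → ℝ) : ‖y‖ ≤ enorm9 y := by
  rw [enorm9_eq_norm_toLp]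
  exact (pi_norm_le_iff_of_nonneg (norm_nonneg _)).2 fun i => PiLp.norm_apply_le (WithLp.toLp 2 y) i

lemma enorm9_le_sqrt_mul_norm (y : Fin d → ℝ) : enorm9 y ≤ √d * ‖y‖ := by
  rw [enorm9_eq_norm_toLp, EuclideanSpace.norm_eq, ← Real.sqrt_sq (norm_nonneg y),
    ← Real.sqrt_mul (Nat.cast_nonneg _)]
  gcongr
  calc ∑ i, ‖y i‖ ^ 2 ≤ ∑ _i : Fin d, ‖y‖ ^ 2 := by
        gcongr with i
        exact norm_le_pi_norm y i
    _ = d * ‖y‖ ^ 2 := by simp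

lemma enorm9_mulVec_le (A : Matrix (Fin d) (Fin d) ℝ) (y : Fin d → ℝ) :
    enorm9 (A *ᵥ y) ≤ √d * d * ‖A‖ * enorm9 y :=
  calc enorm9 (A *ᵥ y) ≤ √d * ‖A *ᵥ y‖ := enorm9_le_sqrt_mul_norm _
    _ ≤ √d * (d * ‖A‖ * enorm9 y) := by
        grw [norm_mulVec_le_card_mul, Fintype.card_fin, norm_le_enorm9]
    _ = √d * d * ‖A‖ * enorm9 y := by ring

end EuclideanNorm

section Coercive

variable {d : ℕ} {M H : Matrix (Fin d) (Fin d) ℝ} {c : ℝ}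

lemma isUnit_det_of_coercive (hc : 0 < c) (hM : ∀ z, c * (z ⬝ᵥ z) ≤ z ⬝ᵥ (M *ᵥ z)) :
    IsUnit M.det := by
  rw [← Matrix.isUnit_iff_isUnit_det, ← Matrix.mulVec_injective_iff_isUnit]
  intro z w hzw
  have h := hM (z - w)
  rw [mulVec_sub, hzw, sub_self, dotProduct_zero] at h
  refine sub_eq_zero.1 (dotProduct_self_eq_zero.1 (le_antisymm ?_ ?_))
  · exact nonpos_of_mul_nonpos_right h hc
  · rw [dotProduct_self_eq_enorm9_sq]; positivity

lemma mul_enorm9_mulVec_le_of_coercive (hM : ∀ z, c * (z ⬝ᵥ z) ≤ z ⬝ᵥ (M *ᵥ z))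
    (hMH : M * H = 1) (y : Fin d → ℝ) : c * enorm9 (H *ᵥ y) ≤ enorm9 y := by
  set z := H *ᵥ y
  have hMz : M *ᵥ z = y := by rw [mulVec_mulVec, hMH, one_mulVec]
  have h : c * enorm9 z * enorm9 z ≤ enorm9 y * enorm9 z :=
    calc c * enorm9 z * enorm9 z = c * (z ⬝ᵥ z) := by rw [dotProduct_self_eq_enorm9_sq]; ring
      _ ≤ z ⬝ᵥ y := hMz ▸ hM z
      _ ≤ enorm9 z * enorm9 y := dotProduct_le_enorm9_mul z y
      _ = enorm9 y * enorm9 z := mul_comm _ _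
  rcases (enorm9_nonneg z).eq_or_lt with hz | hz
  · rw [← hz, mul_zero]; exact enorm9_nonneg y
  · exact le_of_mul_le_mul_right h hz

lemma dotProduct_mul_mul_transpose_mulVec (P A : Matrix (Fin d) (Fin d) ℝ) (z : Fin d → ℝ) :
    z ⬝ᵥ ((P * A * Pᵀ) *ᵥ z) = (Pᵀ *ᵥ z) ⬝ᵥ (A *ᵥ (Pᵀ *ᵥ z)) := by
  rw [← mulVec_mulVec, ← mulVec_mulVec, dotProduct_mulVec, ← mulVec_transpose]

lemma coercive_mul_mul_transpose {P A : Matrix (Fin d) (Fin d) ℝ} {η k : ℝ} (hη : 0 ≤ η)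
    (hk : 0 < k) (hA : ∀ w, η * (w ⬝ᵥ w) ≤ w ⬝ᵥ (A *ᵥ w)) {z : Fin d → ℝ}
    (hz : enorm9 z ≤ k * enorm9 (Pᵀ *ᵥ z)) :
    η / k ^ 2 * (z ⬝ᵥ z) ≤ z ⬝ᵥ ((P * A * Pᵀ) *ᵥ z) := by
  rw [dotProduct_mul_mul_transpose_mulVec]
  refine le_trans ?_ (hA _)
  rw [dotProduct_self_eq_enorm9_sq, dotProduct_self_eq_enorm9_sq, div_mul_eq_mul_div,
    div_le_iff₀ (by positivity)]
  have := pow_le_pow_left₀ (enorm9_nonneg z) hz 2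
  nlinarith

end Coercive

lemma ODE_solution_unique_of_mem_Icc_of_lipschitzWith {E : Type*} [NormedAddCommGroup E]
    [NormedSpace ℝ E] {v : ℝ → E → E} {K : NNReal} {f g : ℝ → E} {a b t₀ : ℝ}
    (hv : ∀ t ∈ Icc a b, LipschitzWith K (v t))
    (hf : ∀ t ∈ Icc a b, HasDerivAt f (v t (f t)) t)
    (hg : ∀ t ∈ Icc a b, HasDerivAt g (v t (g t)) t)
    (ht₀ : t₀ ∈ Icc a b) (heq : f t₀ = g t₀) : EqOn f g (Icc a b) := by
  have hfc : ContinuousOn f (Icc a b) := fun t ht => (hf t ht).continuousAt.continuousWithinAt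
  have hgc : ContinuousOn g (Icc a b) := fun t ht => (hg t ht).continuousAt.continuousWithinAt
  have hleft : Ioc a t₀ ⊆ Icc a b := fun t ht => ⟨ht.1.le, ht.2.trans ht₀.2⟩
  have hright : Ico t₀ b ⊆ Icc a b := fun t ht => ⟨ht₀.1.trans ht.1, ht.2.le⟩
  rw [← Icc_union_Icc_eq_Icc ht₀.1 ht₀.2]
  refine EqOn.union ?_ ?_
  · exact ODE_solution_unique_of_mem_Icc_left (s := fun _ => univ)
      (fun t ht => (hv t (hleft ht)).lipschitzOnWith) (hfc.mono (Icc_subset_Icc_right ht₀.2))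
      (fun t ht => (hf t (hleft ht)).hasDerivWithinAt) (fun _ _ => trivial)
      (hgc.mono (Icc_subset_Icc_right ht₀.2))
      (fun t ht => (hg t (hleft ht)).hasDerivWithinAt) (fun _ _ => trivial) heq
  · exact ODE_solution_unique_of_mem_Icc_right (s := fun _ => univ)
      (fun t ht => (hv t (hright ht)).lipschitzOnWith) (hfc.mono (Icc_subset_Icc_left ht₀.1))
      (fun t ht => (hf t (hright ht)).hasDerivWithinAt) (fun _ _ => trivial)
      (hgc.mono (Icc_subset_Icc_left ht₀.1))
      (fun t ht => (hg t (hright ht)).hasDerivWithinAt) (fun _ _ => trivial) heq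

lemma HasDerivAt.matrix_mul_const {n : Type*} [Fintype n] {f : ℝ → Matrix n n ℝ}
    {f' : Matrix n n ℝ} {t : ℝ} (hf : HasDerivAt f f' t) (C : Matrix n n ℝ) :
    HasDerivAt (fun r => f r * C) (f' * C) t :=
  (LinearMap.toContinuousLinearMap (LinearMap.mulRight ℝ C)).hasFDerivAt.comp_hasDerivAt t hf

section FundamentalMatrix

variable {d : ℕ} {a b : ℝ} {B : ℝ → Matrix (Fin d) (Fin d) ℝ}
  {Φ : ℝ → ℝ → Matrix (Fin d) (Fin d) ℝ}

lemma continuous_fundamentalMatrix_left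
    (hΦ : ∀ t s, HasDerivAt (fun r => Φ r s) (B t * Φ t s) t) (s : ℝ) :
    Continuous fun r => Φ r s :=
  continuous_iff_continuousAt.2 fun r => (hΦ r s).continuousAt

lemma fundamentalMatrix_mul (hB : ContinuousOn B (Icc a b))
    (hΦ : ∀ t s, HasDerivAt (fun r => Φ r s) (B t * Φ t s) t) (hΦid : ∀ s, Φ s s = 1)
    {r s : ℝ} (hr : r ∈ Icc a b) (hs : s ∈ Icc a b) (τ : ℝ) :
    Φ r s * Φ s τ = Φ r τ := by
  obtain ⟨K, hK⟩ := isCompact_Icc.exists_bound_of_continuousOn hB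
  have hlip : ∀ t ∈ Icc a b, LipschitzWith (d * K).toNNReal (fun M => B t * M) :=
    fun t ht => LipschitzWith.of_dist_le_mul fun M N => by
      have hK0 : 0 ≤ d * K := mul_nonneg (Nat.cast_nonneg d) ((norm_nonneg _).trans (hK t ht))
      rw [dist_eq_norm, dist_eq_norm, ← mul_sub, Real.coe_toNNReal _ hK0]
      calc ‖B t * (M - N)‖ ≤ d * ‖B t‖ * ‖M - N‖ := by
            simpa only [Fintype.card_fin] using norm_mul_le_card_mul (B t) (M - N)
        _ ≤ d * K * ‖M - N‖ := by grw [hK t ht]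
  refine ODE_solution_unique_of_mem_Icc_of_lipschitzWith (f := fun r => Φ r s * Φ s τ) hlip
    (fun t _ => ?_) (fun t _ => hΦ t τ) hs (by simp only [hΦid, one_mul]) hr
  show HasDerivAt _ (B t * (Φ t s * Φ s τ)) t
  rw [← mul_assoc]
  exact (hΦ t s).matrix_mul_const (Φ s τ)

lemma fundamentalMatrix_mul_swap (hB : ContinuousOn B (Icc a b))
    (hΦ : ∀ t s, HasDerivAt (fun r => Φ r s) (B t * Φ t s) t) (hΦid : ∀ s, Φ s s = 1)
    {s τ : ℝ} (hs : s ∈ Icc a b) (hτ : τ ∈ Icc a b) :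
    Φ s τ * Φ τ s = 1 := by
  rw [fundamentalMatrix_mul hB hΦ hΦid hs hτ, hΦid]

/-- Continuity in the second variable comes from `Φ s τ = Φ s a * (Φ τ a)⁻¹`. -/
lemma continuousOn_fundamentalMatrix (hB : ContinuousOn B (Icc a b))
    (hΦ : ∀ t s, HasDerivAt (fun r => Φ r s) (B t * Φ t s) t) (hΦid : ∀ s, Φ s s = 1) :
    ContinuousOn (uncurry Φ) (Icc a b ×ˢ Icc a b) := by
  rintro ⟨s, τ⟩ ⟨hs, hτ⟩
  have ha : a ∈ Icc a b := ⟨le_rfl, hs.1.trans hs.2⟩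
  have hΦa := continuous_fundamentalMatrix_left hΦ a
  have hformula : ∀ p ∈ Icc a b ×ˢ Icc a b, uncurry Φ p = Φ p.1 a * (Φ p.2 a)⁻¹ := by
    rintro ⟨s', τ'⟩ ⟨hs', hτ'⟩
    rw [inv_eq_right_inv (fundamentalMatrix_mul_swap hB hΦ hΦid hτ' ha),
      fundamentalMatrix_mul hB hΦ hΦid hs' ha]
    rfl
  have hdet : (Φ τ a).det ≠ 0 :=
    (isUnit_det_of_right_inverse (fundamentalMatrix_mul_swap hB hΦ hΦid hτ ha)).ne_zero
  have hinv : ContinuousAt (fun t => (Φ t a)⁻¹) τ := by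
    refine (continuousAt_matrix_inv _ ?_).comp hΦa.continuousAt
    rw [Ring.inverse_eq_inv']
    exact continuousAt_inv₀ hdet
  refine ContinuousWithinAt.congr ?_ hformula (hformula _ ⟨hs, hτ⟩)
  exact ((hΦa.continuousAt.comp continuousAt_fst).mul
    (hinv.comp_of_eq continuousAt_snd rfl)).continuousWithinAt

end FundamentalMatrix

lemma exists_norm_intervalIntegral_le_mul {E : Type*} [NormedAddCommGroup E] [NormedSpace ℝ E]
    {a b : ℝ} {F : ℝ → ℝ → E} (hF : ContinuousOn (uncurry F) (Icc a b ×ˢ Icc a b)) :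
    ∃ C ≥ 0, ∀ s ∈ Icc a b, ‖∫ τ in s..b, F s τ‖ ≤ C * (b - s) := by
  obtain ⟨C, hC⟩ := (isCompact_Icc.prod isCompact_Icc).exists_bound_of_continuousOn hF
  refine ⟨|C|, abs_nonneg C, fun s hs => ?_⟩
  have h := norm_integral_le_of_norm_le_const (a := s) (b := b) (f := F s) (C := |C|)
    fun τ hτ => ?_
  · rwa [abs_of_nonneg (sub_nonneg.2 hs.2)] at h
  · rw [uIoc_of_le hs.2] at hτ
    exact (hC (s, τ) ⟨hs, hs.1.trans hτ.1.le, hτ.2⟩).trans (le_abs_self C)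

section QuadraticForm

variable {d : ℕ}

lemma mul_le_dotProduct_intervalIntegral_mulVec {G : ℝ → Matrix (Fin d) (Fin d) ℝ} {a b c : ℝ}
    (hab : a ≤ b) (hG : ContinuousOn G (Icc a b))
    (hc : ∀ τ ∈ Icc a b, ∀ z, c * (z ⬝ᵥ z) ≤ z ⬝ᵥ (G τ *ᵥ z)) (z : Fin d → ℝ) :
    c * (b - a) * (z ⬝ᵥ z) ≤ z ⬝ᵥ ((∫ τ in a..b, G τ) *ᵥ z) := by
  let L : Matrix (Fin d) (Fin d) ℝ →ₗ[ℝ] ℝ :=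
    { toFun := fun X => z ⬝ᵥ (X *ᵥ z)
      map_add' := fun X Y => by simp [add_mulVec, dotProduct_add]
      map_smul' := fun r X => by simp [smul_mulVec, dotProduct_smul] }
  have hq : ContinuousOn (fun τ => L (G τ)) (Icc a b) :=
    L.toContinuousLinearMap.continuous.comp_continuousOn hG
  calc c * (b - a) * (z ⬝ᵥ z) = ∫ _ in a..b, c * (z ⬝ᵥ z) := by
        rw [integral_const, smul_eq_mul]; ring
    _ ≤ ∫ τ in a..b, L (G τ) :=
        integral_mono_on hab intervalIntegrable_const (hq.intervalIntegrable_of_Icc hab)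
          fun τ hτ => hc τ hτ z
    _ = L (∫ τ in a..b, G τ) :=
        L.toContinuousLinearMap.intervalIntegral_comp_comm (hG.intervalIntegrable_of_Icc hab)

end QuadraticForm

section Gramian

variable {d : ℕ} {a b : ℝ} {B A : ℝ → Matrix (Fin d) (Fin d) ℝ}
  {Φ : ℝ → ℝ → Matrix (Fin d) (Fin d) ℝ}

noncomputable def gramian (Φ : ℝ → ℝ → Matrix (Fin d) (Fin d) ℝ)
    (A : ℝ → Matrix (Fin d) (Fin d) ℝ) (b s : ℝ) : Matrix (Fin d) (Fin d) ℝ :=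
  ∫ τ in s..b, Φ s τ * A τ * (Φ s τ)ᵀ

lemma continuousOn_gramian_integrand (hΦc : ContinuousOn (uncurry Φ) (Icc a b ×ˢ Icc a b))
    (hA : ContinuousOn A (Icc a b)) :
    ContinuousOn (uncurry fun s τ => Φ s τ * A τ * (Φ s τ)ᵀ) (Icc a b ×ˢ Icc a b) :=
  (hΦc.mul (hA.comp continuousOn_snd fun _ hp => hp.2)).mul
    (continuous_id.matrix_transpose.comp_continuousOn hΦc)

lemma exists_enorm9_gramian_mulVec_le (hΦc : ContinuousOn (uncurry Φ) (Icc a b ×ˢ Icc a b))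
    (hA : ContinuousOn A (Icc a b)) :
    ∃ C ≥ 0, ∀ s ∈ Icc a b, ∀ z, enorm9 (gramian Φ A b s *ᵥ z) ≤ C * (b - s) * enorm9 z := by
  obtain ⟨C, hC0, hC⟩ :=
    exists_norm_intervalIntegral_le_mul (continuousOn_gramian_integrand hΦc hA)
  refine ⟨√d * d * C, by positivity, fun s hs z => ?_⟩
  calc enorm9 (gramian Φ A b s *ᵥ z) ≤ √d * d * ‖gramian Φ A b s‖ * enorm9 z :=
        enorm9_mulVec_le _ _
    _ ≤ √d * d * (C * (b - s)) * enorm9 z := by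
        grw [show ‖gramian Φ A b s‖ ≤ _ from hC s hs]
        exact enorm9_nonneg z
    _ = √d * d * C * (b - s) * enorm9 z := by ring

lemma exists_pos_mul_le_dotProduct_gramian (hB : ContinuousOn B (Icc a b))
    (hΦ : ∀ t s, HasDerivAt (fun r => Φ r s) (B t * Φ t s) t) (hΦid : ∀ s, Φ s s = 1)
    (hA : ContinuousOn A (Icc a b)) {η : ℝ} (hη : 0 < η)
    (hell : ∀ t ∈ Icc a b, ∀ y, η * (y ⬝ᵥ y) ≤ y ⬝ᵥ (A t *ᵥ y)) :
    ∃ c > 0, ∀ s ∈ Icc a b, ∀ z, c * (b - s) * (z ⬝ᵥ z) ≤ z ⬝ᵥ (gramian Φ A b s *ᵥ z) := by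
  have hΦc := continuousOn_fundamentalMatrix hB hΦ hΦid
  obtain ⟨K, hK⟩ := (isCompact_Icc.prod isCompact_Icc).exists_bound_of_continuousOn hΦc
  set k := √d * d * |K| + 1
  have hk : 0 < k := by positivity
  refine ⟨η / k ^ 2, by positivity, fun s hs z => ?_⟩
  have hsub : Icc s b ⊆ Icc a b := Icc_subset_Icc_left hs.1
  refine mul_le_dotProduct_intervalIntegral_mulVec hs.2
    ((continuousOn_gramian_integrand hΦc hA).comp (continuousOn_const.prodMk continuousOn_id)
      fun τ hτ => ⟨hs, hsub hτ⟩) (fun τ hτ w => ?_) z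
  have hτ' := hsub hτ
  refine coercive_mul_mul_transpose hη.le hk (hell τ hτ') ?_
  have hw : (Φ τ s)ᵀ *ᵥ ((Φ s τ)ᵀ *ᵥ w) = w := by
    rw [mulVec_mulVec, ← transpose_mul, fundamentalMatrix_mul_swap hB hΦ hΦid hs hτ',
      transpose_one, one_mulVec]
  calc enorm9 w = enorm9 ((Φ τ s)ᵀ *ᵥ ((Φ s τ)ᵀ *ᵥ w)) := by rw [hw]
    _ ≤ √d * d * ‖Φ τ s‖ * enorm9 ((Φ s τ)ᵀ *ᵥ w) := by
        simpa only [norm_transpose] using enorm9_mulVec_le (Φ τ s)ᵀ _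
    _ ≤ k * enorm9 ((Φ s τ)ᵀ *ᵥ w) := by
        grw [show ‖Φ τ s‖ ≤ |K| from (hK (τ, s) ⟨hτ', hs⟩).trans (le_abs_self K)]
        · exact mul_le_mul_of_nonneg_right (by linarith) (enorm9_nonneg _)
        · exact enorm9_nonneg _

end Gramian

section Drift

variable {d : ℕ} {a b : ℝ} {B : ℝ → Matrix (Fin d) (Fin d) ℝ}
  {Φ : ℝ → ℝ → Matrix (Fin d) (Fin d) ℝ}

lemma exists_norm_fundamentalMatrix_sub_one_le (hB : ContinuousOn B (Icc a b))
    (hΦ : ∀ t s, HasDerivAt (fun r => Φ r s) (B t * Φ t s) t) (hΦid : ∀ s, Φ s s = 1) :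
    ∃ L ≥ 0, ∀ s ∈ Icc a b, ‖Φ s b - 1‖ ≤ L * (b - s) := by
  obtain ⟨L, hL⟩ := isCompact_Icc.exists_bound_of_continuousOn
    (hB.mul (continuous_fundamentalMatrix_left hΦ b).continuousOn)
  refine ⟨|L|, abs_nonneg L, fun s hs => ?_⟩
  have h := (convex_Icc a b).norm_image_sub_le_of_norm_hasDerivWithin_le
    (fun r _ => (hΦ r b).hasDerivWithinAt) (fun r hr => (hL r hr).trans (le_abs_self L))
    ⟨hs.1.trans hs.2, le_rfl⟩ hs
  rwa [hΦid, Real.norm_eq_abs, abs_sub_comm, abs_of_nonneg (sub_nonneg.2 hs.2)] at h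

lemma exists_enorm9_sub_le (hB : ContinuousOn B (Icc a b))
    (hΦ : ∀ t s, HasDerivAt (fun r => Φ r s) (B t * Φ t s) t) (hΦid : ∀ s, Φ s s = 1)
    {β : ℝ → Fin d → ℝ} (hβ : ContinuousOn β (Icc a b)) (v : Fin d → ℝ) :
    ∃ C ≥ 0, ∀ s ∈ Icc a b,
      enorm9 (Φ s b *ᵥ v - (∫ τ in s..b, Φ s τ *ᵥ β τ) - v) ≤ C * (b - s) := by
  obtain ⟨L, hL0, hL⟩ := exists_norm_fundamentalMatrix_sub_one_le hB hΦ hΦid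
  obtain ⟨Cβ, hCβ0, hCβ⟩ := exists_norm_intervalIntegral_le_mul (F := fun s τ => Φ s τ *ᵥ β τ)
    ((continuous_fst.matrix_mulVec continuous_snd).comp_continuousOn
      ((continuousOn_fundamentalMatrix hB hΦ hΦid).prodMk
        (hβ.comp continuousOn_snd fun _ hp => hp.2)))
  have hv := enorm9_nonneg v
  refine ⟨√d * d * L * enorm9 v + √d * Cβ, by positivity, fun s hs => ?_⟩
  calc enorm9 (Φ s b *ᵥ v - (∫ τ in s..b, Φ s τ *ᵥ β τ) - v)
      = enorm9 ((Φ s b - 1) *ᵥ v - ∫ τ in s..b, Φ s τ *ᵥ β τ) := by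
        rw [sub_mulVec, one_mulVec, sub_right_comm]
    _ ≤ √d * d * ‖Φ s b - 1‖ * enorm9 v + √d * ‖∫ τ in s..b, Φ s τ *ᵥ β τ‖ :=
        (enorm9_sub_le _ _).trans (add_le_add (enorm9_mulVec_le _ _) (enorm9_le_sqrt_mul_norm _))
    _ ≤ √d * d * (L * (b - s)) * enorm9 v + √d * (Cβ * (b - s)) := by
        grw [hL s hs, show ‖∫ τ in s..b, Φ s τ *ᵥ β τ‖ ≤ _ from hCβ s hs]
    _ = (√d * d * L * enorm9 v + √d * Cβ) * (b - s) := by ring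

end Drift

section FixedTime

variable {d : ℕ} {M H : Matrix (Fin d) (Fin d) ℝ} {w v : Fin d → ℝ} {t c CM Cv C : ℝ}

lemma inverse_bounds_of_coercive (ht : 0 < t) (hc : 0 < c) (hCv : 0 ≤ Cv) (hCM : 0 ≤ CM)
    (hM : ∀ z, c * t * (z ⬝ᵥ z) ≤ z ⬝ᵥ (M *ᵥ z))
    (hMz : ∀ z, enorm9 (M *ᵥ z) ≤ CM * t * enorm9 z) (hMH : M * H = 1)
    (hw : enorm9 (w - v) ≤ Cv * t) (hC₁ : c⁻¹ * (1 + Cv) ≤ C) (hC₂ : Cv + CM ≤ C)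
    (x y : Fin d → ℝ) :
    t * enorm9 (H *ᵥ y) ≤ C * enorm9 y ∧
      enorm9 (H *ᵥ (w - x)) ≤ C * (1 + enorm9 (v - x) / t) ∧
      enorm9 (H *ᵥ (w - y) - H *ᵥ (w - x)) ≤ C * enorm9 (y - x) / t ∧
      enorm9 (v - x) / t ≤ C * (1 + enorm9 (H *ᵥ (w - x))) := by
  have hH : ∀ z, t * enorm9 (H *ᵥ z) ≤ c⁻¹ * enorm9 z := fun z => by
    rw [le_inv_mul_iff₀ hc, ← mul_assoc]
    exact mul_enorm9_mulVec_le_of_coercive hM hMH z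
  have hcC : c⁻¹ ≤ C := (le_mul_of_one_le_right (inv_nonneg.2 hc.le) (by linarith)).trans hC₁
  have hX := div_nonneg (enorm9_nonneg (v - x)) ht.le
  have hR := enorm9_nonneg (H *ᵥ (w - x))
  refine ⟨(hH y).trans (by gcongr; exact enorm9_nonneg y), ?_, ?_, ?_⟩
  · have hwx : enorm9 (w - x) ≤ Cv * t + enorm9 (v - x) :=
      (sub_add_sub_cancel w v x ▸ enorm9_add_le (w - v) (v - x)).trans (by linarith)
    refine le_trans ?_ (mul_le_mul_of_nonneg_right hC₁ (by linarith))
    refine le_of_mul_le_mul_left ?_ ht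
    calc t * enorm9 (H *ᵥ (w - x)) ≤ c⁻¹ * (Cv * t + enorm9 (v - x)) := by grw [hH, hwx]
      _ ≤ c⁻¹ * ((1 + Cv) * (t + enorm9 (v - x))) := by
          gcongr
          nlinarith [enorm9_nonneg (v - x)]
      _ = t * (c⁻¹ * (1 + Cv) * (1 + enorm9 (v - x) / t)) := by field_simp
  · rw [← mulVec_sub, sub_sub_sub_cancel_left, le_div_iff₀ ht, mul_comm, enorm9_sub_comm]
    exact (hH _).trans (by gcongr; exact enorm9_nonneg _)
  · have hvx : v - x = -(w - v) + M *ᵥ (H *ᵥ (w - x)) := by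
      rw [mulVec_mulVec, hMH, one_mulVec]; abel
    rw [div_le_iff₀ ht]
    calc enorm9 (v - x) ≤ Cv * t + CM * t * enorm9 (H *ᵥ (w - x)) := by
          rw [hvx]
          grw [enorm9_add_le, ← hw, hMz, ← enorm9_sub_comm, neg_sub]
      _ ≤ C * t + C * t * enorm9 (H *ᵥ (w - x)) := by gcongr <;> linarith
      _ = C * (1 + enorm9 (H *ᵥ (w - x))) * t := by ring

end FixedTime

theorem stmt_9_general {d : ℕ} (T : ℝ) (v : Fin d → ℝ)
    (Btil : ℝ → Matrix (Fin d) (Fin d) ℝ) (βtil : ℝ → Fin d → ℝ)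
    (atil : ℝ → Matrix (Fin d) (Fin d) ℝ)
    (hB : ContDiffOn ℝ 1 Btil (Set.Icc 0 T))
    (hβ : ContDiffOn ℝ 1 βtil (Set.Icc 0 T))
    (ha : ContinuousOn atil (Set.Icc 0 T))
    (η : ℝ) (hη : 0 < η)
    (hell : ∀ s ∈ Set.Icc (0 : ℝ) T, ∀ y : Fin d → ℝ,
      η * (y ⬝ᵥ y) ≤ y ⬝ᵥ (atil s *ᵥ y))
    -- `Φ t s` is the fundamental matrix of `x' = B̃(t) x`
    (Φ : ℝ → ℝ → Matrix (Fin d) (Fin d) ℝ)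
    (hΦid : ∀ s, Φ s s = 1)
    (hΦderiv : ∀ t s : ℝ, HasDerivAt (fun r => Φ r s) (Btil t * Φ t s) t)
    (vfun : ℝ → Fin d → ℝ)
    (hvfun : ∀ s, vfun s = Φ s T *ᵥ v - ∫ τ in s..T, Φ s τ *ᵥ βtil τ)
    (Htil : ℝ → Matrix (Fin d) (Fin d) ℝ)
    (hHtil : ∀ s, Htil s = (∫ τ in s..T, Φ s τ * atil τ * (Φ s τ)ᵀ)⁻¹)
    (rtil : ℝ → (Fin d → ℝ) → Fin d → ℝ)
    (hrtil : ∀ s x, rtil s x = Htil s *ᵥ (vfun s - x)) :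
    ∃ C > (0 : ℝ), ∀ s ∈ Set.Ico (0 : ℝ) T, ∀ x y : Fin d → ℝ,
      (T - s) * enorm9 (Htil s *ᵥ y) ≤ C * enorm9 y ∧
      enorm9 (rtil s x) ≤ C * (1 + enorm9 (v - x) / (T - s)) ∧
      enorm9 (rtil s y - rtil s x) ≤ C * enorm9 (y - x) / (T - s) ∧
      enorm9 (v - x) / (T - s) ≤ C * (1 + enorm9 (rtil s x)) := by
  have hB' := hB.continuousOn
  obtain ⟨c, hc, hcoer⟩ := exists_pos_mul_le_dotProduct_gramian hB' hΦderiv hΦid ha hη hell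
  obtain ⟨CM, hCM, hM⟩ :=
    exists_enorm9_gramian_mulVec_le (continuousOn_fundamentalMatrix hB' hΦderiv hΦid) ha
  obtain ⟨Cv, hCv, hv⟩ := exists_enorm9_sub_le hB' hΦderiv hΦid hβ.continuousOn v
  have hC : 0 < c⁻¹ * (1 + Cv) := by positivity
  refine ⟨c⁻¹ * (1 + Cv) + Cv + CM, by positivity, fun s hs x y => ?_⟩
  have hs' : s ∈ Icc 0 T := Ico_subset_Icc_self hs
  have hts : 0 < T - s := sub_pos.2 hs.2
  have hMH : gramian Φ atil T s * Htil s = 1 := by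
    rw [hHtil]
    exact mul_nonsing_inv _ (isUnit_det_of_coercive (mul_pos hc hts) (hcoer s hs'))
  simp only [hrtil]
  exact inverse_bounds_of_coercive hts hc hCv hCM (hcoer s hs') (hM s hs') hMH
    (hvfun s ▸ hv s hs') (by linarith) (by linarith) x y

/-- Lemma 5.3: bounds on `H̃` and `r̃` for the linear process:
(a) `(T-s)‖H̃(s)‖ ≤ C` (operator norm), (b) `‖r̃(s,x)‖ ≤ C(1+‖v-x‖/(T-s))`,
(c) `‖r̃(s,y)-r̃(s,x)‖ ≤ C‖y-x‖/(T-s)`, (d) `‖v-x‖/(T-s) ≤ C(1+‖r̃(s,x)‖)`. -/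
theorem stmt_9 {d : ℕ} (T : ℝ) (hT : 0 < T) (v : Fin d → ℝ)
    (Btil : ℝ → Matrix (Fin d) (Fin d) ℝ) (βtil : ℝ → Fin d → ℝ)
    (atil : ℝ → Matrix (Fin d) (Fin d) ℝ)
    (hB : ContDiffOn ℝ 1 Btil (Set.Icc 0 T))
    (hβ : ContDiffOn ℝ 1 βtil (Set.Icc 0 T))
    (ha : ContinuousOn atil (Set.Icc 0 T))
    (η : ℝ) (hη : 0 < η)
    (hell : ∀ s ∈ Set.Icc (0 : ℝ) T, ∀ y : Fin d → ℝ,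
      η * (y ⬝ᵥ y) ≤ y ⬝ᵥ (atil s *ᵥ y))
    -- `Φ t s` is the fundamental matrix of `x' = B̃(t) x`
    (Φ : ℝ → ℝ → Matrix (Fin d) (Fin d) ℝ)
    (hΦid : ∀ s, Φ s s = 1)
    (hΦderiv : ∀ t s : ℝ, HasDerivAt (fun r => Φ r s) (Btil t * Φ t s) t)
    (vfun : ℝ → Fin d → ℝ)
    (hvfun : ∀ s, vfun s = Φ s T *ᵥ v - ∫ τ in s..T, Φ s τ *ᵥ βtil τ)
    (Htil : ℝ → Matrix (Fin d) (Fin d) ℝ)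
    (hHtil : ∀ s, Htil s = (∫ τ in s..T, Φ s τ * atil τ * (Φ s τ)ᵀ)⁻¹)
    (rtil : ℝ → (Fin d → ℝ) → Fin d → ℝ)
    (hrtil : ∀ s x, rtil s x = Htil s *ᵥ (vfun s - x)) :
    ∃ C > (0 : ℝ), ∀ s ∈ Set.Ico (0 : ℝ) T, ∀ x y : Fin d → ℝ,
      (T - s) * enorm9 (Htil s *ᵥ y) ≤ C * enorm9 y ∧
      enorm9 (rtil s x) ≤ C * (1 + enorm9 (v - x) / (T - s)) ∧
      enorm9 (rtil s y - rtil s x) ≤ C * enorm9 (y - x) / (T - s) ∧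
      enorm9 (v - x) / (T - s) ≤ C * (1 + enorm9 (rtil s x)) :=
  stmt_9_general T v Btil βtil atil hB hβ ha η hη hell Φ hΦid hΦderiv vfun hvfun Htil hHtil rtil
    hrtil
end

section
/- (Matrix Gronwall / fundamental matrix bound.) Let Ψ be the principal fundamental matrix at 0 of dΨ(s) = A(s)Ψ(s)ds, Ψ(0) = I, where A = A₁ + A₂ is continuous on [0,T), A₂ is bounded by C₂, and A₁ satisfies y'A₁(s)y ≤ ((1-ε₀)/(T-s) + C₁)‖y‖² for some ε₀ ∈ (0,1/2) and C₁ > 0, for all s ∈ [0,T) and y ∈ ℝ^d. Then ‖Ψ(t)Ψ(s)⁻¹‖ ≤ e^{T(C₁+C₂)}((T-s)/(T-t))^{1-ε₀} for all 0 ≤ s ≤ t < T. -/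
/-!
Fix `s` and `y` and follow `Z(u) = Ψ(u) Ψ(s)⁻¹ y`, which solves `Z' = (A₁ + A₂) Z` with
`Z(s) = y`. The one-sided bound on `A₁` and Cauchy–Schwarz for `A₂` give
`(|Z|²)' ≤ (2(1-ε₀)/(T-u) + 2(C₁+C₂)) |Z|²`, and Gronwall's argument with the integrating factor
`(T-u)^{2(1-ε₀)} e^{-2(C₁+C₂)u}` yields
`|Z(t)|² ≤ ((T-s)/(T-t))^{2(1-ε₀)} e^{2(C₁+C₂)(t-s)} |y|²`. Take square roots and use
`t - s ≤ T`.
-/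

open Matrix Real

attribute [local instance] Matrix.normedAddCommGroup Matrix.normedSpace

/-- Euclidean norm of a vector in `ℝ^d`. -/
noncomputable def enorm13 {d : ℕ} (y : Fin d → ℝ) : ℝ := Real.sqrt (y ⬝ᵥ y)

open Set

theorem HasDerivAt.dotProduct {n : Type*} [Fintype n] {Y Z : ℝ → n → ℝ} {Y' Z' : n → ℝ} {u : ℝ}
    (hY : HasDerivAt Y Y' u) (hZ : HasDerivAt Z Z' u) :
    HasDerivAt (fun v => Y v ⬝ᵥ Z v) (Y' ⬝ᵥ Z u + Y u ⬝ᵥ Z') u := by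
  show HasDerivAt (fun v => ∑ i, Y v i * Z v i) (∑ i, Y' i * Z u i + ∑ i, Y u i * Z' i) u
  rw [← Finset.sum_add_distrib]
  exact HasDerivAt.fun_sum fun i _ => (hasDerivAt_pi.1 hY i).mul (hasDerivAt_pi.1 hZ i)

theorem HasDerivAt.mulVec_const {𝕜 : Type*} [NontriviallyNormedField 𝕜] [CompleteSpace 𝕜]
    {m n : Type*} [Fintype m] [Fintype n] {Ψ : 𝕜 → Matrix m n 𝕜} {Ψ' : Matrix m n 𝕜} {u : 𝕜}
    (hΨ : HasDerivAt Ψ Ψ' u) (w : n → 𝕜) :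
    HasDerivAt (fun v => Ψ v *ᵥ w) (Ψ' *ᵥ w) u := by
  exact (LinearMap.toContinuousLinearMap ((mulVecBilin 𝕜 𝕜).flip w)).hasFDerivAt.comp_hasDerivAt
    u hΨ

theorem dotProduct_self_nonneg {n : Type*} [Fintype n] (v : n → ℝ) : 0 ≤ v ⬝ᵥ v := by
  simpa using dotProduct_self_star_nonneg v

theorem enorm13_eq_norm {d : ℕ} (v : Fin d → ℝ) :
    enorm13 v = ‖(WithLp.toLp 2 v : EuclideanSpace ℝ (Fin d))‖ := by
  rw [enorm13, ← sqrt_sq (norm_nonneg _), ← real_inner_self_eq_norm_sq,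
    EuclideanSpace.inner_toLp_toLp, star_trivial]

theorem dotProduct_le_enorm13_mul {d : ℕ} (v w : Fin d → ℝ) : v ⬝ᵥ w ≤ enorm13 v * enorm13 w := by
  rw [enorm13_eq_norm, enorm13_eq_norm, dotProduct_comm, ← star_trivial v,
    ← EuclideanSpace.inner_toLp_toLp]
  exact real_inner_le_norm _ _

theorem dotProduct_mulVec_le_of_enorm13_le {d : ℕ} {A : Matrix (Fin d) (Fin d) ℝ} {c : ℝ}
    (hA : ∀ y, enorm13 (A *ᵥ y) ≤ c * enorm13 y) (y : Fin d → ℝ) :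
    y ⬝ᵥ (A *ᵥ y) ≤ c * (y ⬝ᵥ y) :=
  calc y ⬝ᵥ (A *ᵥ y) ≤ enorm13 y * enorm13 (A *ᵥ y) := dotProduct_le_enorm13_mul _ _
    _ ≤ enorm13 y * (c * enorm13 y) := mul_le_mul_of_nonneg_left (hA y) (sqrt_nonneg _)
    _ = c * (y ⬝ᵥ y) := by rw [mul_left_comm, enorm13, mul_self_sqrt (dotProduct_self_nonneg y)]

theorem le_mul_exp_sub_of_hasDerivAt_le_mul {f f' K k : ℝ → ℝ} {s t : ℝ} (hst : s ≤ t)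
    (hf : ∀ u ∈ Icc s t, HasDerivAt f (f' u) u) (hK : ∀ u ∈ Icc s t, HasDerivAt K (k u) u)
    (hle : ∀ u ∈ Ioo s t, f' u ≤ k u * f u) :
    f t ≤ f s * exp (K t - K s) := by
  have hg : ∀ u ∈ Icc s t, HasDerivAt (fun v => f v * exp (-K v))
      (f' u * exp (-K u) + f u * (exp (-K u) * -k u)) u :=
    fun u hu => (hf u hu).mul ((hK u hu).neg.exp)
  have hanti : AntitoneOn (fun v => f v * exp (-K v)) (Icc s t) := by
    refine antitoneOn_of_hasDerivWithinAt_nonpos (convex_Icc s t)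
      (f' := fun u => f' u * exp (-K u) + f u * (exp (-K u) * -k u))
      (fun u hu => (hg u hu).continuousAt.continuousWithinAt) (fun u hu => ?_) (fun u hu => ?_)
    · rw [interior_Icc] at hu
      exact (hg u (Ioo_subset_Icc_self hu)).hasDerivWithinAt
    · rw [interior_Icc] at hu
      calc _ = (f' u - k u * f u) * exp (-K u) := by ring
        _ ≤ 0 := mul_nonpos_of_nonpos_of_nonneg (sub_nonpos.2 (hle u hu)) (exp_pos _).le
  have hts : f t * exp (-K t) ≤ f s * exp (-K s) :=
    hanti (left_mem_Icc.2 hst) (right_mem_Icc.2 hst) hst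
  calc f t = f t * exp (-K t) * exp (K t) := by rw [mul_assoc, ← exp_add]; simp
    _ ≤ f s * exp (-K s) * exp (K t) := by gcongr
    _ = f s * exp (K t - K s) := by rw [mul_assoc, ← exp_add]; ring_nf

theorem le_mul_rpow_mul_exp_of_hasDerivAt_le {f f' : ℝ → ℝ} {T α β s t : ℝ} (hst : s ≤ t)
    (htT : t < T) (hf : ∀ u ∈ Icc s t, HasDerivAt f (f' u) u)
    (hle : ∀ u ∈ Ioo s t, f' u ≤ (α / (T - u) + β) * f u) :
    f t ≤ f s * (((T - s) / (T - t)) ^ α * exp (β * (t - s))) := by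
  have hK : ∀ u ∈ Icc s t, HasDerivAt (fun v => β * v - α * log (T - v))
      (β * 1 - α * (-1 / (T - u))) u := fun u hu =>
    ((hasDerivAt_id u).const_mul β).sub
      ((((hasDerivAt_id u).const_sub T).log (sub_pos.2 (hu.2.trans_lt htT)).ne').const_mul α)
  convert le_mul_exp_sub_of_hasDerivAt_le_mul hst hf hK fun u hu => ?_ using 2
  · rw [rpow_def_of_pos (div_pos (by linarith) (by linarith)), ← exp_add,
      log_div (by linarith) (by linarith)]
    ring_nf
  · convert hle u hu using 2; ring

theorem dotProduct_self_le_of_hasDerivAt_mulVec {n : Type*} [Fintype n]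
    {A : ℝ → Matrix n n ℝ} {Z : ℝ → n → ℝ} {T α β s t : ℝ} (hst : s ≤ t) (htT : t < T)
    (hZ : ∀ u ∈ Icc s t, HasDerivAt Z (A u *ᵥ Z u) u)
    (hA : ∀ u ∈ Ioo s t, ∀ y, y ⬝ᵥ (A u *ᵥ y) ≤ (α / (T - u) + β) * (y ⬝ᵥ y)) :
    Z t ⬝ᵥ Z t ≤ Z s ⬝ᵥ Z s * (((T - s) / (T - t)) ^ (2 * α) * exp (2 * β * (t - s))) := by
  refine le_mul_rpow_mul_exp_of_hasDerivAt_le hst htT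
    (fun u hu => (hZ u hu).dotProduct (hZ u hu)) fun u hu => ?_
  have hquad := hA u hu (Z u)
  rw [dotProduct_comm, ← two_mul]
  calc 2 * (Z u ⬝ᵥ (A u *ᵥ Z u)) ≤ 2 * ((α / (T - u) + β) * (Z u ⬝ᵥ Z u)) := by gcongr
    _ = (2 * α / (T - u) + 2 * β) * (Z u ⬝ᵥ Z u) := by ring

theorem enorm13_le_of_hasDerivAt_mulVec {d : ℕ}
    {A : ℝ → Matrix (Fin d) (Fin d) ℝ} {Z : ℝ → Fin d → ℝ} {T α β s t : ℝ} (hst : s ≤ t)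
    (htT : t < T) (hZ : ∀ u ∈ Icc s t, HasDerivAt Z (A u *ᵥ Z u) u)
    (hA : ∀ u ∈ Ioo s t, ∀ y, y ⬝ᵥ (A u *ᵥ y) ≤ (α / (T - u) + β) * (y ⬝ᵥ y)) :
    enorm13 (Z t) ≤ enorm13 (Z s) * (((T - s) / (T - t)) ^ α * exp (β * (t - s))) := by
  have hratio : 0 ≤ (T - s) / (T - t) := div_nonneg (by linarith) (by linarith)
  have hsq : ((T - s) / (T - t)) ^ (2 * α) * exp (2 * β * (t - s))
      = (((T - s) / (T - t)) ^ α * exp (β * (t - s))) ^ 2 := by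
    rw [mul_comm 2 α, rpow_mul hratio, rpow_two, mul_pow, ← exp_nat_mul]
    ring_nf
  have hsquares := dotProduct_self_le_of_hasDerivAt_mulVec hst htT hZ hA
  rw [hsq] at hsquares
  calc enorm13 (Z t) ≤ sqrt (Z s ⬝ᵥ Z s * (((T - s) / (T - t)) ^ α * exp (β * (t - s))) ^ 2) :=
        sqrt_le_sqrt hsquares
    _ = enorm13 (Z s) * (((T - s) / (T - t)) ^ α * exp (β * (t - s))) := by
        rw [sqrt_mul (dotProduct_self_nonneg _), sqrt_sq (by positivity), enorm13]

theorem stmt_13_general {d : ℕ} (T : ℝ) (ε₀ C₁ C₂ : ℝ)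
    (hC₁ : 0 < C₁) (hC₂ : 0 ≤ C₂)
    (A₁ A₂ : ℝ → Matrix (Fin d) (Fin d) ℝ)
    (hA₁ : ∀ s ∈ Set.Ico (0 : ℝ) T, ∀ y : Fin d → ℝ,
      y ⬝ᵥ (A₁ s *ᵥ y) ≤ ((1 - ε₀) / (T - s) + C₁) * (y ⬝ᵥ y))
    (hA₂ : ∀ s ∈ Set.Ico (0 : ℝ) T, ∀ y : Fin d → ℝ,
      enorm13 (A₂ s *ᵥ y) ≤ C₂ * enorm13 y)
    (Ψ : ℝ → Matrix (Fin d) (Fin d) ℝ)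
    (hΨ : ∀ s ∈ Set.Ico (0 : ℝ) T, HasDerivAt Ψ ((A₁ s + A₂ s) * Ψ s) s)
    (hΨinv : ∀ s ∈ Set.Ico (0 : ℝ) T, IsUnit (Ψ s)) :
    ∀ s t : ℝ, 0 ≤ s → s ≤ t → t < T → ∀ y : Fin d → ℝ,
      enorm13 ((Ψ t * (Ψ s)⁻¹) *ᵥ y)
        ≤ Real.exp (T * (C₁ + C₂)) * ((T - s) / (T - t)) ^ (1 - ε₀) * enorm13 y := by
  intro s t hs hst htT y
  have hIcc : Icc s t ⊆ Ico 0 T := fun u hu => ⟨hs.trans hu.1, hu.2.trans_lt htT⟩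
  set Z : ℝ → Fin d → ℝ := fun u => Ψ u *ᵥ ((Ψ s)⁻¹ *ᵥ y)
  have hZs : Z s = y := by
    simp [Z, mulVec_mulVec,
      mul_nonsing_inv _ ((isUnit_iff_isUnit_det _).1 (hΨinv s (hIcc (left_mem_Icc.2 hst))))]
  have hZ : ∀ u ∈ Icc s t, HasDerivAt Z ((A₁ u + A₂ u) *ᵥ Z u) u := fun u hu =>
    ((hΨ u (hIcc hu)).mulVec_const _).congr_deriv (mulVec_mulVec _ _ _).symm
  have hA : ∀ u ∈ Ioo s t, ∀ x, x ⬝ᵥ ((A₁ u + A₂ u) *ᵥ x)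
      ≤ ((1 - ε₀) / (T - u) + (C₁ + C₂)) * (x ⬝ᵥ x) := fun u hu x => by
    have hu' := hIcc (Ioo_subset_Icc_self hu)
    rw [add_mulVec, dotProduct_add]
    linarith [hA₁ u hu' x, dotProduct_mulVec_le_of_enorm13_le (hA₂ u hu') x]
  have hZt := enorm13_le_of_hasDerivAt_mulVec hst htT hZ hA
  rw [hZs] at hZt
  have hexp : exp ((C₁ + C₂) * (t - s)) ≤ exp (T * (C₁ + C₂)) :=
    exp_le_exp.2 (by nlinarith)
  calc enorm13 ((Ψ t * (Ψ s)⁻¹) *ᵥ y) = enorm13 (Z t) := by rw [← mulVec_mulVec]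
    _ ≤ enorm13 y * (((T - s) / (T - t)) ^ (1 - ε₀) * exp ((C₁ + C₂) * (t - s))) := hZt
    _ ≤ enorm13 y * (((T - s) / (T - t)) ^ (1 - ε₀) * exp (T * (C₁ + C₂))) := by
        have hratio : 0 ≤ ((T - s) / (T - t)) ^ (1 - ε₀) :=
          rpow_nonneg (div_nonneg (by linarith) (by linarith)) _
        exact mul_le_mul_of_nonneg_left (mul_le_mul_of_nonneg_left hexp hratio) (sqrt_nonneg _)
    _ = exp (T * (C₁ + C₂)) * ((T - s) / (T - t)) ^ (1 - ε₀) * enorm13 y := by ring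

/-- Lemma 6.4: fundamental matrix bound. If `Ψ' = (A₁+A₂)Ψ`, `Ψ(0) = I`,
`y'A₁(s)y ≤ ((1-ε₀)/(T-s) + C₁)‖y‖²` and `‖A₂(s)‖ ≤ C₂`, then
`‖Ψ(t)Ψ(s)⁻¹‖ ≤ e^{T(C₁+C₂)}((T-s)/(T-t))^{1-ε₀}` for `0 ≤ s ≤ t < T`. -/
theorem stmt_13 {d : ℕ} (T : ℝ) (hT : 0 < T) (ε₀ C₁ C₂ : ℝ)
    (hε₀ : ε₀ ∈ Set.Ioo (0 : ℝ) (1 / 2)) (hC₁ : 0 < C₁) (hC₂ : 0 ≤ C₂)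
    (A₁ A₂ : ℝ → Matrix (Fin d) (Fin d) ℝ)
    (hA₁c : ContinuousOn A₁ (Set.Ico 0 T)) (hA₂c : ContinuousOn A₂ (Set.Ico 0 T))
    (hA₁ : ∀ s ∈ Set.Ico (0 : ℝ) T, ∀ y : Fin d → ℝ,
      y ⬝ᵥ (A₁ s *ᵥ y) ≤ ((1 - ε₀) / (T - s) + C₁) * (y ⬝ᵥ y))
    (hA₂ : ∀ s ∈ Set.Ico (0 : ℝ) T, ∀ y : Fin d → ℝ,
      enorm13 (A₂ s *ᵥ y) ≤ C₂ * enorm13 y)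
    (Ψ : ℝ → Matrix (Fin d) (Fin d) ℝ) (hΨ0 : Ψ 0 = 1)
    (hΨ : ∀ s ∈ Set.Ico (0 : ℝ) T, HasDerivAt Ψ ((A₁ s + A₂ s) * Ψ s) s)
    (hΨinv : ∀ s ∈ Set.Ico (0 : ℝ) T, IsUnit (Ψ s)) :
    ∀ s t : ℝ, 0 ≤ s → s ≤ t → t < T → ∀ y : Fin d → ℝ,
      enorm13 ((Ψ t * (Ψ s)⁻¹) *ᵥ y)
        ≤ Real.exp (T * (C₁ + C₂)) * ((T - s) / (T - t)) ^ (1 - ε₀) * enorm13 y :=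
  stmt_13_general T ε₀ C₁ C₂ hC₁ hC₂ A₁ A₂ hA₁ hA₂ Ψ hΨ hΨinv
end

section
/- Let b, b̃, a, ã be locally Lipschitz in s ∈ [0,T] and globally Lipschitz in x ∈ ℝ^d, with ã(T,v) = a(T,v). Then for all x and s ∈ [0,T): ‖b(s,x) - b̃(s,x)‖ ≲ 1 + ‖x-v‖ and ‖a(s,x) - ã(s,x)‖_F ≲ (T-s) + ‖x-v‖. If moreover ‖r̃(s,x)‖ ≲ 1 + ‖x-v‖/(T-s) and ‖H̃(s,x)‖_F ≲ (T-s)⁻¹ + ‖x-v‖/(T-s), then the functional G(s,x) = (b-b̃)'r̃ - ½tr((a-ã)(H̃ - r̃r̃')) satisfies |G(s,x)| ≲ 1 + (T-s) + ‖x-v‖ + ‖x-v‖/(T-s) + ‖x-v‖²/(T-s) + ‖x-v‖³/(T-s)². -/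
open Matrix

/-- Euclidean norm of a vector in `ℝ^d`. -/
noncomputable def enorm18 {d : ℕ} (y : Fin d → ℝ) : ℝ := Real.sqrt (y ⬝ᵥ y)

/-- Frobenius norm of a `d × d` real matrix. -/
noncomputable def frob18 {d : ℕ} (A : Matrix (Fin d) (Fin d) ℝ) : ℝ :=
  Real.sqrt (∑ i, ∑ j, (A i j) ^ 2)

/-!
Telescope through the anchor point `(T, v)`, where the two drifts differ by a fixed
vector and the two diffusion coefficients agree: the Lipschitz bounds then give
`‖b - b̃‖ ≲ 1 + ‖x - v‖` and `‖a - ã‖_F ≲ (T - s) + ‖x - v‖`. For `G`, Cauchy–Schwarz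
for the dot product and for the Frobenius inner product (`tr (A B) = ⟪Aᵀ, B⟫_F`),
together with `‖r r'‖_F ≤ ‖r‖²`, reduce the claim to a scalar inequality, which becomes
polynomial after writing `‖x - v‖ = q (T - s)`.
-/

open WithLp

attribute [local instance] Matrix.frobeniusSeminormedAddCommGroup

theorem abs_dotProduct_le {n : Type*} [Fintype n] (x y : n → ℝ) :
    |x ⬝ᵥ y| ≤ ‖toLp 2 x‖ * ‖toLp 2 y‖ := by
  simpa [EuclideanSpace.inner_toLp_toLp, dotProduct_comm] using
    abs_real_inner_le_norm (toLp 2 x) (toLp 2 y)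

namespace Matrix

variable {m n : Type*} [Fintype m] [Fintype n]

theorem frobenius_norm_eq_norm_vec {α : Type*} [SeminormedAddCommGroup α] (A : Matrix m n α) :
    ‖A‖ = ‖toLp 2 (vec A)‖ := by
  rw [frobenius_norm_def, PiLp.norm_eq_of_L2, Fintype.sum_prod_type, Finset.sum_comm,
    Real.sqrt_eq_rpow]
  simp only [Real.rpow_two, vec]

theorem abs_trace_mul_le (A : Matrix m n ℝ) (B : Matrix n m ℝ) :
    |trace (A * B)| ≤ ‖A‖ * ‖B‖ := by
  simpa only [vec_dotProduct_vec, transpose_transpose, ← frobenius_norm_eq_norm_vec,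
    frobenius_norm_transpose] using abs_dotProduct_le (vec Aᵀ) (vec B)

theorem frobenius_norm_vecMulVec_le {α : Type*} [RCLike α] (x : m → α) (y : n → α) :
    ‖vecMulVec x y‖ ≤ ‖toLp 2 x‖ * ‖toLp 2 y‖ := by
  rw [vecMulVec_eq Unit]
  simpa using frobenius_norm_mul (replicateCol Unit x) (replicateRow Unit y)

end Matrix

theorem enorm18_eq_norm {d : ℕ} (y : Fin d → ℝ) : enorm18 y = ‖toLp 2 y‖ := by
  simp [enorm18, EuclideanSpace.norm_eq, dotProduct, sq]

theorem frob18_eq_norm {d : ℕ} (A : Matrix (Fin d) (Fin d) ℝ) : frob18 A = ‖A‖ := by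
  simp [frob18, frobenius_norm_def, Real.sqrt_eq_rpow]

noncomputable def enorm18Seminorm (d : ℕ) : AddGroupSeminorm (Fin d → ℝ) where
  toFun := enorm18
  map_zero' := by simp [enorm18_eq_norm]
  add_le' x y := by
    simpa only [enorm18_eq_norm, toLp_add] using norm_add_le (toLp 2 x) (toLp 2 y)
  neg' x := by simp [enorm18_eq_norm]

noncomputable def frob18Seminorm (d : ℕ) : AddGroupSeminorm (Matrix (Fin d) (Fin d) ℝ) where
  toFun := frob18
  map_zero' := by simp [frob18_eq_norm]
  add_le' A B := by simpa only [frob18_eq_norm] using norm_add_le A B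
  neg' A := by simp [frob18_eq_norm]

namespace AddGroupSeminorm

variable {E X : Type*} [AddCommGroup E] (N : AddGroupSeminorm E) (f g : ℝ → X → E)
  {s t L δ : ℝ} {x y : X}

theorem map_sub_le_of_lipschitz (hs : N (f s y - f t y) ≤ L * |s - t|)
    (hx : N (f s x - f s y) ≤ L * δ) : N (f s x - f t y) ≤ L * (|s - t| + δ) :=
  calc N (f s x - f t y) = N ((f s x - f s y) + (f s y - f t y)) := by rw [sub_add_sub_cancel]
    _ ≤ L * δ + L * |s - t| := (map_add_le_add N _ _).trans (add_le_add hx hs)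
    _ = L * (|s - t| + δ) := by ring

theorem map_sub_sub_le_of_lipschitz (hfs : N (f s y - f t y) ≤ L * |s - t|)
    (hfx : N (f s x - f s y) ≤ L * δ) (hgs : N (g s y - g t y) ≤ L * |s - t|)
    (hgx : N (g s x - g s y) ≤ L * δ) :
    N (f s x - g s x) ≤ N (f t y - g t y) + 2 * L * (|s - t| + δ) :=
  calc N (f s x - g s x) = N ((f s x - f t y) + (f t y - g t y) - (g s x - g t y)) := by
        congr 1; abel
    _ ≤ N (f s x - f t y) + N (f t y - g t y) + N (g s x - g t y) :=
        (map_sub_le_add N _ _).trans (add_le_add_left (map_add_le_add N _ _) _)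
    _ ≤ L * (|s - t| + δ) + N (f t y - g t y) + L * (|s - t| + δ) := by
        gcongr
        exacts [map_sub_le_of_lipschitz N f hfs hfx, map_sub_le_of_lipschitz N g hgs hgx]
    _ = N (f t y - g t y) + 2 * L * (|s - t| + δ) := by ring

end AddGroupSeminorm

theorem abs_dotProduct_sub_half_trace_le {d : ℕ} (β r : Fin d → ℝ)
    (α H : Matrix (Fin d) (Fin d) ℝ) :
    |β ⬝ᵥ r - 1 / 2 * trace (α * (H - vecMulVec r r))|
      ≤ enorm18 β * enorm18 r + 1 / 2 * (frob18 α * (frob18 H + enorm18 r ^ 2)) := by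
  have hrr : ‖vecMulVec r r‖ ≤ ‖toLp 2 r‖ ^ 2 :=
    (frobenius_norm_vecMulVec_le r r).trans_eq (sq _).symm
  have htr : |trace (α * (H - vecMulVec r r))| ≤ ‖α‖ * (‖H‖ + ‖toLp 2 r‖ ^ 2) :=
    (abs_trace_mul_le _ _).trans (by gcongr; exact (norm_sub_le _ _).trans (by gcongr))
  simp only [enorm18_eq_norm, frob18_eq_norm]
  calc |β ⬝ᵥ r - 1 / 2 * trace (α * (H - vecMulVec r r))|
      ≤ |β ⬝ᵥ r| + 1 / 2 * |trace (α * (H - vecMulVec r r))| := by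
        simpa [abs_mul] using abs_sub (β ⬝ᵥ r) (1 / 2 * trace (α * (H - vecMulVec r r)))
    _ ≤ _ := by gcongr; exact abs_dotProduct_le β r

theorem exponent_bound_of_norm_bounds {β r α H n τ C Cr : ℝ} (hτ : 0 < τ) (hn : 0 ≤ n)
    (hC : 0 ≤ C) (hCr : 0 ≤ Cr) (hr0 : 0 ≤ r) (hH0 : 0 ≤ H) (hβ : β ≤ C * (1 + n))
    (hα : α ≤ C * (τ + n)) (hr : r ≤ Cr * (1 + n / τ)) (hH : H ≤ Cr * (τ⁻¹ + n / τ)) :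
    β * r + 1 / 2 * (α * (H + r ^ 2)) ≤
      3 / 2 * (C * Cr * (1 + Cr)) * (1 + τ + n + n / τ + n ^ 2 / τ + n ^ 3 / τ ^ 2) := by
  obtain ⟨q, hq0, rfl⟩ : ∃ q, 0 ≤ q ∧ n = q * τ :=
    ⟨n / τ, by positivity, by field_simp⟩
  have hqτ : q * τ / τ = q := by field_simp
  have hHq : Cr * (τ⁻¹ + q * τ / τ) = Cr * (1 + q * τ) / τ := by field_simp
  have hsq : (q * τ) ^ 2 / τ = q * (q * τ) := by field_simp
  have hcube : (q * τ) ^ 3 / τ ^ 2 = q ^ 2 * (q * τ) := by field_simp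
  rw [hqτ] at hr ⊢
  rw [hHq] at hH
  rw [hsq, hcube]
  have h1 : β * r ≤ C * (1 + q * τ) * (Cr * (1 + q)) := mul_le_mul hβ hr hr0 (by positivity)
  have h2 :
      α * (H + r ^ 2) ≤ C * Cr * ((1 + q) * (1 + q * τ)) + C * Cr ^ 2 * (τ * (1 + q) ^ 3) :=
    calc α * (H + r ^ 2) ≤ C * (τ + q * τ) * (Cr * (1 + q * τ) / τ + (Cr * (1 + q)) ^ 2) :=
          mul_le_mul hα (by gcongr) (by positivity) (by positivity)
      _ = _ := by field_simp
  set P := 1 + τ + q * τ + q + q * (q * τ) + q ^ 2 * (q * τ)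
  have hP1 : (1 + q) * (1 + q * τ) ≤ P := by nlinarith [mul_nonneg (pow_nonneg hq0 3) hτ.le]
  have hP3 : τ * (1 + q) ^ 3 ≤ 3 * P := by nlinarith [mul_nonneg (mul_nonneg hq0 hq0) hτ.le]
  have hCCr : 0 ≤ C * Cr := mul_nonneg hC hCr
  linarith [mul_le_mul_of_nonneg_left hP1 hCCr,
    mul_le_mul_of_nonneg_left hP3 (mul_nonneg hCCr hCr)]

theorem add_two_mul_le_mul_one_add {M L T τ n : ℝ} (hM : 0 ≤ M) (hL : 0 ≤ L)
    (hT : 0 ≤ T) (hτT : τ ≤ T) (hn : 0 ≤ n) :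
    M + 2 * L * (τ + n) ≤ (M + 2 * L * (T + 1)) * (1 + n) := by
  nlinarith [mul_nonneg hM hn, mul_nonneg (mul_nonneg hL hT) hn]

/-- Lemma 4.3: if `b, b̃, a, ã` are (locally) Lipschitz in `s` and globally
Lipschitz in `x`, and `ã(T,v) = a(T,v)`, then
`‖b - b̃‖ ≲ 1 + ‖x-v‖` and `‖a - ã‖_F ≲ (T-s) + ‖x-v‖`; if moreover `r̃` and
`H̃` satisfy the stated bounds then `G` satisfies
`|G(s,x)| ≲ 1 + (T-s) + ‖x-v‖ + ‖x-v‖/(T-s) + ‖x-v‖²/(T-s) + ‖x-v‖³/(T-s)²`. -/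
theorem stmt_18 {d : ℕ} (T : ℝ) (hT : 0 < T) (v : Fin d → ℝ)
    (b btil : ℝ → (Fin d → ℝ) → Fin d → ℝ)
    (a atil : ℝ → (Fin d → ℝ) → Matrix (Fin d) (Fin d) ℝ)
    (L : ℝ) (hL : 0 < L)
    -- Lipschitz in `s`, uniformly in `x`, on `[0,T]`
    (hbs : ∀ x, ∀ s₁ ∈ Set.Icc (0 : ℝ) T, ∀ s₂ ∈ Set.Icc (0 : ℝ) T,
      enorm18 (b s₁ x - b s₂ x) ≤ L * |s₁ - s₂| ∧
      enorm18 (btil s₁ x - btil s₂ x) ≤ L * |s₁ - s₂| ∧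
      frob18 (a s₁ x - a s₂ x) ≤ L * |s₁ - s₂| ∧
      frob18 (atil s₁ x - atil s₂ x) ≤ L * |s₁ - s₂|)
    -- global Lipschitz in `x`
    (hbx : ∀ s ∈ Set.Icc (0 : ℝ) T, ∀ x y : Fin d → ℝ,
      enorm18 (b s x - b s y) ≤ L * enorm18 (x - y) ∧
      enorm18 (btil s x - btil s y) ≤ L * enorm18 (x - y) ∧
      frob18 (a s x - a s y) ≤ L * enorm18 (x - y) ∧
      frob18 (atil s x - atil s y) ≤ L * enorm18 (x - y))
    (haT : atil T v = a T v)
    (rtil : ℝ → (Fin d → ℝ) → Fin d → ℝ)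
    (Htil : ℝ → (Fin d → ℝ) → Matrix (Fin d) (Fin d) ℝ)
    (G : ℝ → (Fin d → ℝ) → ℝ)
    (hG : ∀ s x, G s x = (b s x - btil s x) ⬝ᵥ rtil s x
      - (1 / 2) * Matrix.trace
          ((a s x - atil s x) * (Htil s x - vecMulVec (rtil s x) (rtil s x)))) :
    (∃ C > (0 : ℝ), ∀ s ∈ Set.Ico (0 : ℝ) T, ∀ x : Fin d → ℝ,
      enorm18 (b s x - btil s x) ≤ C * (1 + enorm18 (x - v)) ∧
      frob18 (a s x - atil s x) ≤ C * ((T - s) + enorm18 (x - v))) ∧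
    ((∃ Cr > (0 : ℝ), ∀ s ∈ Set.Ico (0 : ℝ) T, ∀ x : Fin d → ℝ,
        enorm18 (rtil s x) ≤ Cr * (1 + enorm18 (x - v) / (T - s)) ∧
        frob18 (Htil s x) ≤ Cr * ((T - s)⁻¹ + enorm18 (x - v) / (T - s))) →
      ∃ C' > (0 : ℝ), ∀ s ∈ Set.Ico (0 : ℝ) T, ∀ x : Fin d → ℝ,
        |G s x| ≤ C' * (1 + (T - s) + enorm18 (x - v)
          + enorm18 (x - v) / (T - s) + enorm18 (x - v) ^ 2 / (T - s)
          + enorm18 (x - v) ^ 3 / (T - s) ^ 2)) := by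
  set M := enorm18 (b T v - btil T v)
  have hM : 0 ≤ M := Real.sqrt_nonneg _
  set C := M + 2 * L * (T + 1)
  have hC : 0 < C := by positivity
  have hdiff : ∀ s ∈ Set.Ico (0 : ℝ) T, ∀ x : Fin d → ℝ,
      enorm18 (b s x - btil s x) ≤ C * (1 + enorm18 (x - v)) ∧
      frob18 (a s x - atil s x) ≤ C * ((T - s) + enorm18 (x - v)) := by
    intro s hs x
    have hsI : s ∈ Set.Icc 0 T := Set.Ico_subset_Icc_self hs
    have hsT : |s - T| = T - s := by rw [abs_sub_comm, abs_of_pos (sub_pos.2 hs.2)]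
    obtain ⟨hbs₁, hbs₂, has₁, has₂⟩ := hbs v s hsI T ⟨hT.le, le_rfl⟩
    obtain ⟨hbx₁, hbx₂, hax₁, hax₂⟩ := hbx s hsI x v
    have hb := (enorm18Seminorm d).map_sub_sub_le_of_lipschitz b btil hbs₁ hbx₁ hbs₂ hbx₂
    have ha := (frob18Seminorm d).map_sub_sub_le_of_lipschitz a atil has₁ hax₁ has₂ hax₂
    rw [haT, sub_self, map_zero, zero_add] at ha
    rw [hsT] at hb ha
    have hn : 0 ≤ enorm18 (x - v) := Real.sqrt_nonneg _
    exact ⟨hb.trans (add_two_mul_le_mul_one_add hM hL.le hT.le (by linarith [hs.1]) hn),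
      ha.trans (mul_le_mul_of_nonneg_right (by nlinarith) (by linarith [hs.2]))⟩
  refine ⟨⟨C, hC, hdiff⟩, ?_⟩
  rintro ⟨Cr, hCr, hrH⟩
  refine ⟨3 / 2 * (C * Cr * (1 + Cr)), by positivity, fun s hs x => ?_⟩
  obtain ⟨hb, ha⟩ := hdiff s hs x
  obtain ⟨hr, hH⟩ := hrH s hs x
  rw [hG]
  exact (abs_dotProduct_sub_half_trace_le _ _ _ _).trans <|
    exponent_bound_of_norm_bounds (sub_pos.2 hs.2) (Real.sqrt_nonneg _) hC.le hCr.le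
      (Real.sqrt_nonneg _) (Real.sqrt_nonneg _) hb ha hr hH
end

section
/- Under the bounds of Lemma 4.3, for every ε ∈ (0,1/6) there is a constant K > 0 (independent of m) such that for all m ∈ ℕ and t ∈ [0,T): if ‖X_s - v‖ ≤ m(T-s)^{1/2-ε} for all s ∈ [0,t] (i.e. t ≤ σ_m), then ψ(t) = exp(∫₀ᵗ G(s,X_s)ds) ≤ exp(Km³). Concretely: if |G(s,x)| ≤ C(1 + (T-s) + ‖x-v‖ + ‖x-v‖/(T-s) + ‖x-v‖²/(T-s) + ‖x-v‖³/(T-s)²) and ‖X_s - v‖ ≤ m(T-s)^{1/2-ε}, then ∫₀ᵗ |G(s,X_s)|ds ≤ Km³ with K depending only on C, T, ε. -/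
/-!
Put `u = T - s`. Before `σ_m` we have `‖X_s - v‖ ≤ m u^{1/2-ε}`, and since the bound on `|G|` is
monotone in `‖x - v‖` and `m ≤ m² ≤ m³`, each of its six terms is at most `m³ u^α` for some
`α ∈ {0, 1, 1/2-ε, -1/2-ε, -2ε, -1/2-3ε}`. All these exponents exceed `-1` as soon as `ε < 1/6`,
the critical one being `-1/2-3ε`, so `∫₀ᵗ (T-s)^α ds ≤ T^{α+1}/(α+1)` uniformly in `t < T` and
`K = C Σ_α T^{α+1}/(α+1)` works. The bound on `ψ` follows from `∫ G ≤ ∫ |G|`.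
-/

open Matrix intervalIntegral

/-- Euclidean norm of a vector in `ℝ^d`. -/
noncomputable def enorm19 {d : ℕ} (y : Fin d → ℝ) : ℝ := Real.sqrt (y ⬝ᵥ y)

open MeasureTheory

theorem intervalIntegrable_sub_rpow {a : ℝ} (ha : -1 < a) (T t₀ t₁ : ℝ) :
    IntervalIntegrable (fun s => (T - s) ^ a) volume t₀ t₁ := by
  simpa using (intervalIntegrable_rpow' ha (a := T - t₁) (b := T - t₀)).comp_sub_left T |>.symm

theorem integral_sub_rpow {a : ℝ} (ha : -1 < a) (T t₀ t₁ : ℝ) :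
    ∫ s in t₀..t₁, (T - s) ^ a = ((T - t₀) ^ (a + 1) - (T - t₁) ^ (a + 1)) / (a + 1) := by
  rw [integral_comp_sub_left (fun x => x ^ a), integral_rpow (Or.inl ha)]

theorem integral_sub_rpow_le {a T t : ℝ} (ha : -1 < a) (htT : t ≤ T) :
    ∫ s in (0 : ℝ)..t, (T - s) ^ a ≤ T ^ (a + 1) / (a + 1) := by
  have : 0 ≤ (T - t) ^ (a + 1) := Real.rpow_nonneg (sub_nonneg.2 htT) _
  rw [integral_sub_rpow ha, sub_zero]
  gcongr <;> linarith

section FiniteSums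

variable {ι : Type*} [Fintype ι] {a : ι → ℝ}

theorem intervalIntegrable_sum_sub_rpow (ha : ∀ i, -1 < a i) (T t₀ t₁ : ℝ) :
    IntervalIntegrable (fun s => ∑ i, (T - s) ^ a i) volume t₀ t₁ := by
  simpa only [Finset.sum_fn] using
    IntervalIntegrable.sum Finset.univ fun i _ => intervalIntegrable_sub_rpow (ha i) T t₀ t₁

theorem integral_sum_sub_rpow_le (ha : ∀ i, -1 < a i) {T t : ℝ} (htT : t ≤ T) :
    ∫ s in (0 : ℝ)..t, ∑ i, (T - s) ^ a i ≤ ∑ i, T ^ (a i + 1) / (a i + 1) := by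
  rw [integral_finsetSum fun i _ => intervalIntegrable_sub_rpow (ha i) T 0 t]
  exact Finset.sum_le_sum fun i _ => integral_sub_rpow_le (ha i) htT

end FiniteSums

/-- No integrability of `f` is needed: if `|f|` is not integrable, its integral is `0`. -/
theorem integral_abs_le_integral_of_abs_le {f g : ℝ → ℝ} {a b : ℝ} (hab : a ≤ b)
    (hg : IntervalIntegrable g volume a b) (h : ∀ x ∈ Set.Icc a b, |f x| ≤ g x) :
    ∫ x in a..b, |f x| ≤ ∫ x in a..b, g x := by
  by_cases hf : IntervalIntegrable (fun x => |f x|) volume a b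
  · exact integral_mono_on hab hf hg h
  · rw [integral_undef hf]
    exact integral_nonneg hab fun x hx => (abs_nonneg _).trans (h x hx)

theorem rpow_pow_div_pow {u : ℝ} (hu : 0 < u) {a b : ℝ} {k j : ℕ} (h : k * a - j = b) :
    (u ^ a) ^ k / u ^ j = u ^ b := by
  rw [← Real.rpow_natCast, ← Real.rpow_mul hu.le, ← Real.rpow_natCast u j, ← Real.rpow_sub hu,
    mul_comm, h]

noncomputable def growthMajorant (u N : ℝ) : ℝ := 1 + u + N + N / u + N ^ 2 / u + N ^ 3 / u ^ 2

noncomputable def majorantExponents (ε : ℝ) : Fin 6 → ℝ :=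
  ![0, 1, 1 / 2 - ε, -1 / 2 - ε, -2 * ε, -1 / 2 - 3 * ε]

theorem growthMajorant_le_pow_three_mul {u N b m : ℝ} (hu : 0 < u) (hN : 0 ≤ N)
    (hNb : N ≤ m * b) (hm : 1 ≤ m) : growthMajorant u N ≤ m ^ 3 * growthMajorant u b := by
  have hb : 0 ≤ b := nonneg_of_mul_nonneg_right (hN.trans hNb) (by linarith)
  have h1 : 1 ≤ m ^ 3 := one_le_pow₀ hm
  have h2 : m ^ 2 ≤ m ^ 3 := pow_le_pow_right₀ hm (by norm_num)
  have h3 : m ≤ m ^ 3 := by simpa using pow_le_pow_right₀ hm (show 1 ≤ 3 by norm_num)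
  calc growthMajorant u N ≤ growthMajorant u (m * b) := by unfold growthMajorant; gcongr
    _ = 1 + u + m * b + m * (b / u) + m ^ 2 * (b ^ 2 / u) + m ^ 3 * (b ^ 3 / u ^ 2) := by
      unfold growthMajorant; ring
    _ ≤ m ^ 3 * growthMajorant u b := by
      unfold growthMajorant
      have := mul_le_mul_of_nonneg_right h1 hu.le
      have := mul_le_mul_of_nonneg_right h3 hb
      have := mul_le_mul_of_nonneg_right h3 (div_nonneg hb hu.le)
      have := mul_le_mul_of_nonneg_right h2 (div_nonneg (sq_nonneg b) hu.le)
      linarith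

theorem growthMajorant_rpow_eq_sum {u : ℝ} (hu : 0 < u) (ε : ℝ) :
    growthMajorant u (u ^ (1 / 2 - ε)) = ∑ i, u ^ majorantExponents ε i := by
  have h1 : u ^ (1 / 2 - ε) / u = u ^ (-1 / 2 - ε) := by
    simpa using rpow_pow_div_pow (k := 1) (j := 1) hu (a := 1 / 2 - ε) (by ring)
  have h2 : (u ^ (1 / 2 - ε)) ^ 2 / u = u ^ (-2 * ε) := by
    simpa using rpow_pow_div_pow (k := 2) (j := 1) hu (a := 1 / 2 - ε) (by push_cast; ring)
  have h3 : (u ^ (1 / 2 - ε)) ^ 3 / u ^ 2 = u ^ (-1 / 2 - 3 * ε) :=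
    rpow_pow_div_pow hu (by push_cast; ring)
  simp only [growthMajorant, Fin.sum_univ_six, majorantExponents, h1, h2, h3]
  simp

/-- Corollary 4.4: under the bound of Lemma 4.3 on `G`, for every
`ε ∈ (0,1/6)` there is `K > 0` (independent of `m`) such that whenever a path
`X` satisfies `‖X_s - v‖ ≤ m(T-s)^{1/2-ε}` for all `s ∈ [0,t]`, one has
`∫₀ᵗ|G(s,X_s)|ds ≤ Km³`, and hence `ψ(t) = exp(∫₀ᵗ G(s,X_s)ds) ≤ exp(Km³)`. -/
theorem stmt_19 {d : ℕ} (T C ε : ℝ) (hT : 0 < T) (hC : 0 < C)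
    (hε : ε ∈ Set.Ioo (0 : ℝ) (1 / 6)) (v : Fin d → ℝ)
    (G : ℝ → (Fin d → ℝ) → ℝ)
    (hG : ∀ s ∈ Set.Ico (0 : ℝ) T, ∀ x : Fin d → ℝ,
      |G s x| ≤ C * (1 + (T - s) + enorm19 (x - v)
        + enorm19 (x - v) / (T - s) + enorm19 (x - v) ^ 2 / (T - s)
        + enorm19 (x - v) ^ 3 / (T - s) ^ 2)) :
    ∃ K > (0 : ℝ), ∀ m : ℕ, 1 ≤ m → ∀ t ∈ Set.Ico (0 : ℝ) T,
      ∀ X : ℝ → Fin d → ℝ, Continuous X →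
      (∀ s ∈ Set.Icc (0 : ℝ) t, enorm19 (X s - v) ≤ m * (T - s) ^ ((1 : ℝ) / 2 - ε)) →
      (∫ s in (0 : ℝ)..t, |G s (X s)|) ≤ K * m ^ 3 ∧
      Real.exp (∫ s in (0 : ℝ)..t, G s (X s)) ≤ Real.exp (K * m ^ 3) := by
  set a := majorantExponents ε
  have ha : ∀ i, -1 < a i := by
    intro i; fin_cases i <;> simp [a, majorantExponents] <;> linarith [hε.2]
  refine ⟨C * ∑ i, T ^ (a i + 1) / (a i + 1), ?_, ?_⟩
  · exact mul_pos hC <| Finset.sum_pos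
      (fun i _ => div_pos (Real.rpow_pos_of_pos hT _) (by linarith [ha i])) Finset.univ_nonempty
  intro m hm t ⟨ht0, htT⟩ X _ hX
  have hpointwise : ∀ s ∈ Set.Icc 0 t, |G s (X s)| ≤ C * m ^ 3 * ∑ i, (T - s) ^ a i := by
    intro s hs
    have hsT : 0 < T - s := by linarith [hs.2]
    calc |G s (X s)| ≤ C * growthMajorant (T - s) (enorm19 (X s - v)) :=
          hG s ⟨hs.1, by linarith⟩ _
      _ ≤ C * (m ^ 3 * growthMajorant (T - s) ((T - s) ^ (1 / 2 - ε))) := by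
          gcongr
          exact growthMajorant_le_pow_three_mul hsT (Real.sqrt_nonneg _) (hX s hs)
            (by exact_mod_cast hm)
      _ = C * m ^ 3 * ∑ i, (T - s) ^ a i := by rw [growthMajorant_rpow_eq_sum hsT]; ring
  have habs : ∫ s in (0 : ℝ)..t, |G s (X s)| ≤ (C * ∑ i, T ^ (a i + 1) / (a i + 1)) * m ^ 3 :=
    calc ∫ s in (0 : ℝ)..t, |G s (X s)|
        ≤ ∫ s in (0 : ℝ)..t, C * m ^ 3 * ∑ i, (T - s) ^ a i :=
          integral_abs_le_integral_of_abs_le ht0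
            ((intervalIntegrable_sum_sub_rpow ha T 0 t).const_mul _) hpointwise
      _ = C * m ^ 3 * ∫ s in (0 : ℝ)..t, ∑ i, (T - s) ^ a i := integral_const_mul _ _
      _ ≤ C * m ^ 3 * ∑ i, T ^ (a i + 1) / (a i + 1) := by
          gcongr
          exact integral_sum_sub_rpow_le ha htT.le
      _ = _ := by ring
  exact ⟨habs, Real.exp_le_exp.2 <|
    (le_abs_self _).trans <| (abs_integral_le_integral_abs ht0).trans habs⟩
end
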